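/- arXiv:1303.5324 — 9 statements merged into one kernel-verified Lean document; each statement's English description precedes it below -/
import Mathlib

section
/- Permanence of the Lyapunov equation: suppose the operator-valued functions B, C, X satisfy the vessel differential equations B'(x) = -(A∘B(x)∘σ₂ + B(x)∘γ)∘σ₁⁻¹, C'(x) = σ₁⁻¹∘(-σ₂∘C(x)∘A_ζ + γ∘C(x)), and X'(x) = B(x)∘σ₂∘C(x) for all x ∈ ℝ. If the Lyapunov equation A∘X(x₀) + X(x₀)∘A_ζ + B(x₀)∘σ₁∘C(x₀) = 0 holds for some x₀ ∈ ℝ, then it holds for every x ∈ ℝ. -/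
/-!
Along the vessel equations the Lyapunov expression `A X + X A_ζ + B σ₁ C` has zero derivative:
in `(B σ₁ C)'` the factors `σ₁⁻¹` cancel against `σ₁`, the `γ`-terms cancel each other, and what
is left is `-(A B σ₂ C + B σ₂ C A_ζ) = -(A X + X A_ζ)'`. A function on `ℝ` with zero derivative is
constant, so the expression vanishes everywhere once it vanishes at `x₀`.
-/

open ContinuousLinearMap

section ScalarTower

variable {𝕜 𝕜' : Type*} [NontriviallyNormedField 𝕜] [NontriviallyNormedField 𝕜']
  [NormedAlgebra 𝕜 𝕜']

theorem HasDerivAt.clm_comp_of_isScalarTower {E F G : Type*}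
    [NormedAddCommGroup E] [NormedSpace 𝕜' E]
    [NormedAddCommGroup F] [NormedSpace 𝕜 F] [NormedSpace 𝕜' F] [IsScalarTower 𝕜 𝕜' F]
    [NormedAddCommGroup G] [NormedSpace 𝕜 G] [NormedSpace 𝕜' G] [IsScalarTower 𝕜 𝕜' G]
    {c : 𝕜 → F →L[𝕜'] G} {c' : F →L[𝕜'] G} {d : 𝕜 → E →L[𝕜'] F} {d' : E →L[𝕜'] F} {x : 𝕜}
    (hc : HasDerivAt c c' x) (hd : HasDerivAt d d' x) :
    HasDerivAt (fun y => c y ∘L d y) (c' ∘L d x + c x ∘L d') x := by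
  simpa [add_comm] using ((compL 𝕜' E F G).bilinearRestrictScalars 𝕜).hasDerivAt_of_bilinear
    (fun _ => hc) (fun _ => hd)

theorem hasDerivAt_lyapunov_eq_zero {H V : Type*}
    [NormedAddCommGroup H] [NormedSpace 𝕜 H] [NormedSpace 𝕜' H] [IsScalarTower 𝕜 𝕜' H]
    [NormedAddCommGroup V] [NormedSpace 𝕜 V] [NormedSpace 𝕜' V] [IsScalarTower 𝕜 𝕜' V]
    {σ₁ σ₁inv σ₂ γ : V →L[𝕜'] V} (hσ₁ : σ₁ ∘L σ₁inv = 1) (hσ₁inv : σ₁inv ∘L σ₁ = 1)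
    {A Aζ : H →L[𝕜'] H} {B : 𝕜 → V →L[𝕜'] H} {C : 𝕜 → H →L[𝕜'] V} {X : 𝕜 → H →L[𝕜'] H} {x : 𝕜}
    (hB : HasDerivAt B ((-((A ∘L B x) ∘L σ₂ + B x ∘L γ)) ∘L σ₁inv) x)
    (hC : HasDerivAt C (σ₁inv ∘L (-(σ₂ ∘L (C x ∘L Aζ)) + γ ∘L C x)) x)
    (hX : HasDerivAt X ((B x ∘L σ₂) ∘L C x) x) :
    HasDerivAt (fun y => A ∘L X y + X y ∘L Aζ + (B y ∘L σ₁) ∘L C y) 0 x := by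
  have hBσ₁ : HasDerivAt (fun y => B y ∘L σ₁) (-((A ∘L B x) ∘L σ₂ + B x ∘L γ)) x := by
    simpa [comp_assoc, hσ₁inv, one_def] using
      hB.clm_comp_of_isScalarTower (hasDerivAt_const x σ₁)
  have hAX := (hasDerivAt_const x A).clm_comp_of_isScalarTower hX
  have hXAζ := hX.clm_comp_of_isScalarTower (hasDerivAt_const x Aζ)
  refine ((hAX.add hXAζ).add (hBσ₁.clm_comp_of_isScalarTower hC)).congr_deriv ?_
  rw [comp_assoc (B x) σ₁, ← comp_assoc σ₁ σ₁inv, hσ₁, one_def, id_comp]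
  simp only [zero_comp, comp_zero, zero_add, add_zero, neg_comp, comp_neg, add_comp, comp_add,
    comp_assoc]
  abel

end ScalarTower

theorem lyapunov_permanence_general
    {H : Type*} [NormedAddCommGroup H] [InnerProductSpace ℂ H]
    (σ₁ σ₁inv σ₂ γ : (Fin 2 → ℂ) →L[ℂ] (Fin 2 → ℂ))
    (hσ₁ : σ₁ ∘L σ₁inv = 1) (hσ₁inv : σ₁inv ∘L σ₁ = 1)
    (A Aζ : H →L[ℂ] H)
    (B : ℝ → ((Fin 2 → ℂ) →L[ℂ] H))
    (C : ℝ → (H →L[ℂ] (Fin 2 → ℂ)))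
    (X : ℝ → (H →L[ℂ] H))
    (hB : ∀ x : ℝ, HasDerivAt B ((-((A ∘L B x) ∘L σ₂ + B x ∘L γ)) ∘L σ₁inv) x)
    (hC : ∀ x : ℝ, HasDerivAt C (σ₁inv ∘L (-(σ₂ ∘L (C x ∘L Aζ)) + γ ∘L C x)) x)
    (hX : ∀ x : ℝ, HasDerivAt X ((B x ∘L σ₂) ∘L C x) x)
    (x₀ : ℝ)
    (h₀ : A ∘L X x₀ + X x₀ ∘L Aζ + (B x₀ ∘L σ₁) ∘L C x₀ = 0) :
    ∀ x : ℝ, A ∘L X x + X x ∘L Aζ + (B x ∘L σ₁) ∘L C x = 0 := by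
  have hderiv (x : ℝ) := hasDerivAt_lyapunov_eq_zero hσ₁ hσ₁inv (hB x) (hC x) (hX x)
  intro x
  rw [← h₀]
  exact is_const_of_deriv_eq_zero (fun y => (hderiv y).differentiableAt)
    (fun y => (hderiv y).deriv) x x₀

/-- **Permanence of the Lyapunov equation.**  If the operator-valued functions
`B`, `C`, `X` satisfy the vessel differential equations and the Lyapunov equation
`A ∘ X + X ∘ A_ζ + B σ₁ C = 0` holds at one point `x₀`, then it holds everywhere. -/
theorem lyapunov_permanence
    {H : Type*} [NormedAddCommGroup H] [InnerProductSpace ℂ H] [CompleteSpace H]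
    (σ₁ σ₁inv σ₂ γ : (Fin 2 → ℂ) →L[ℂ] (Fin 2 → ℂ))
    (hσ₁ : σ₁ ∘L σ₁inv = 1) (hσ₁inv : σ₁inv ∘L σ₁ = 1)
    (A Aζ : H →L[ℂ] H)
    (B : ℝ → ((Fin 2 → ℂ) →L[ℂ] H))
    (C : ℝ → (H →L[ℂ] (Fin 2 → ℂ)))
    (X : ℝ → (H →L[ℂ] H))
    (hB : ∀ x : ℝ, HasDerivAt B ((-((A ∘L B x) ∘L σ₂ + B x ∘L γ)) ∘L σ₁inv) x)
    (hC : ∀ x : ℝ, HasDerivAt C (σ₁inv ∘L (-(σ₂ ∘L (C x ∘L Aζ)) + γ ∘L C x)) x)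
    (hX : ∀ x : ℝ, HasDerivAt X ((B x ∘L σ₂) ∘L C x) x)
    (x₀ : ℝ)
    (h₀ : A ∘L X x₀ + X x₀ ∘L Aζ + (B x₀ ∘L σ₁) ∘L C x₀ = 0) :
    ∀ x : ℝ, A ∘L X x + X x ∘L Aζ + (B x ∘L σ₁) ∘L C x = 0 :=
  lyapunov_permanence_general σ₁ σ₁inv σ₂ γ hσ₁ hσ₁inv A Aζ B C X hB hC hX x₀ h₀
end

section
/- If the bounded operators A, A_ζ, X on H and B : ℂ² → H, C : H → ℂ² satisfy the Lyapunov equation A∘X + X∘A_ζ + B∘σ₁∘C = 0 and λ ∈ ℂ is such that both λ·I − A and λ·I + A_ζ are invertible in L(H,H) and X is invertible, then the 2×2 matrix S(λ) = I − C∘X⁻¹∘(λ·I − A)⁻¹∘B∘σ₁ is invertible with two-sided inverse T(λ) = I + C∘(λ·I + A_ζ)⁻¹∘X⁻¹∘B∘σ₁; that is, S(λ)∘T(λ) = I and T(λ)∘S(λ) = I as linear maps on ℂ². -/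
/-!
Put `K = B σ₁ C`, `P = X⁻¹ (λ - A)⁻¹` and `Q = (λ + A_ζ)⁻¹ X⁻¹`, so that `S = 1 - C P B σ₁` and
`T = 1 + C Q B σ₁`. The Lyapunov equation says `K = (λ - A) X - X (λ + A_ζ)`, and conjugating by
`X⁻¹` gives `X⁻¹ K X⁻¹ = X⁻¹ (λ - A) - (λ + A_ζ) X⁻¹`. Sandwiching these between the resolvents
yields `P K Q = Q - P = Q K P`, and these two identities are exactly what makes the cross terms
of `S T - 1` and `T S - 1` cancel.
-/

open ContinuousLinearMap

section Ring

variable {R : Type*} [Ring R]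

theorem mul_sub_mul_mul_eq_of_mul_eq_one {r p x q s : R} (hr : r * p = 1) (hs : q * s = 1) :
    r * (p * x - x * q) * s = x * s - r * x := by
  simp only [mul_sub, sub_mul, ← mul_assoc, hr, one_mul]
  simp only [mul_assoc, hs, mul_one]

theorem mul_sub_mul_mul_self_eq {x y p q : R} (hx : x * y = 1) (hy : y * x = 1) :
    y * (x * q - p * x) * y = q * y - y * p := by
  simp only [mul_sub, sub_mul, ← mul_assoc, hy, one_mul]
  simp only [mul_assoc, hx, mul_one]

variable {𝕜 : Type*} [CommRing 𝕜] [Algebra 𝕜 R]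

theorem eq_sub_of_lyapunov {a b x k : R} (l : 𝕜) (h : a * x + x * b + k = 0) :
    k = (l • 1 - a) * x - x * (l • 1 + b) := by
  rw [eq_neg_of_add_eq_zero_right h]
  simp only [sub_mul, mul_add, smul_one_mul, mul_smul_one]
  abel

variable {a b x y k r s : R} {l : 𝕜}

theorem lyapunov_resolvent_sandwich_left (hx : x * y = 1) (hy : y * x = 1)
    (hr : r * (l • 1 - a) = 1) (hs : (l • 1 + b) * s = 1) (h : a * x + x * b + k = 0) :
    y * r * k * (s * y) = s * y - y * r := by
  have hrks : r * k * s = x * s - r * x := by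
    rw [eq_sub_of_lyapunov l h, mul_sub_mul_mul_eq_of_mul_eq_one hr hs]
  calc y * r * k * (s * y) = y * (r * k * s) * y := by simp only [mul_assoc]
    _ = s * y - y * r := by rw [hrks, mul_sub_mul_mul_self_eq hx hy]

theorem lyapunov_resolvent_sandwich_right (hx : x * y = 1) (hy : y * x = 1)
    (hr : (l • 1 - a) * r = 1) (hs : s * (l • 1 + b) = 1) (h : a * x + x * b + k = 0) :
    s * y * k * (y * r) = s * y - y * r := by
  have hyky : y * k * y = y * (l • 1 - a) - (l • 1 + b) * y := by
    rw [eq_sub_of_lyapunov l h, ← neg_sub (x * (l • 1 + b)), mul_neg, neg_mul,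
      mul_sub_mul_mul_self_eq hx hy, neg_sub]
  calc s * y * k * (y * r) = s * (y * k * y) * r := by simp only [mul_assoc]
    _ = s * y - y * r := by
      rw [hyky, ← neg_sub ((l • 1 + b) * y), mul_neg, neg_mul,
        mul_sub_mul_mul_eq_of_mul_eq_one hs hr, neg_sub]

end Ring

section PushThrough

variable {𝕜 E F : Type*} [Ring 𝕜]
  [TopologicalSpace E] [AddCommGroup E] [Module 𝕜 E] [IsTopologicalAddGroup E]
  [TopologicalSpace F] [AddCommGroup F] [Module 𝕜 F] [IsTopologicalAddGroup F]
  {C : E →L[𝕜] F} {B : F →L[𝕜] E} {P Q : E →L[𝕜] E}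

theorem one_sub_comp_one_add_eq_one (h : P ∘L (B ∘L C) ∘L Q = Q - P) :
    (1 - C ∘L P ∘L B) ∘L (1 + C ∘L Q ∘L B) = 1 := by
  have hcross : (C ∘L P ∘L B) ∘L (C ∘L Q ∘L B) = C ∘L (Q - P) ∘L B := by
    simp only [← h, comp_assoc]
  change (1 - C ∘L P ∘L B) * (1 + C ∘L Q ∘L B) = 1
  rw [sub_mul, one_mul, mul_add, mul_one, mul_def _ (C ∘L Q ∘L B), hcross, sub_comp, comp_sub]
  abel

theorem one_add_comp_one_sub_eq_one (h : Q ∘L (B ∘L C) ∘L P = Q - P) :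
    (1 + C ∘L Q ∘L B) ∘L (1 - C ∘L P ∘L B) = 1 := by
  have hcross : (C ∘L Q ∘L B) ∘L (C ∘L P ∘L B) = C ∘L (Q - P) ∘L B := by
    simp only [← h, comp_assoc]
  change (1 + C ∘L Q ∘L B) * (1 - C ∘L P ∘L B) = 1
  rw [add_mul, one_mul, mul_sub, mul_one, mul_def _ (C ∘L P ∘L B), hcross, sub_comp, comp_sub]
  abel

end PushThrough

theorem transfer_function_inverse_general
    {H : Type*} [NormedAddCommGroup H] [InnerProductSpace ℂ H]
    (σ₁ : (Fin 2 → ℂ) →L[ℂ] (Fin 2 → ℂ))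
    (A Aζ X Xinv : H →L[ℂ] H)
    (hX : X ∘L Xinv = 1) (hXinv : Xinv ∘L X = 1)
    (B : (Fin 2 → ℂ) →L[ℂ] H) (C : H →L[ℂ] (Fin 2 → ℂ))
    (l : ℂ) (R Rζ : H →L[ℂ] H)
    (hR : (l • (1 : H →L[ℂ] H) - A) ∘L R = 1)
    (hR' : R ∘L (l • (1 : H →L[ℂ] H) - A) = 1)
    (hRζ : (l • (1 : H →L[ℂ] H) + Aζ) ∘L Rζ = 1)
    (hRζ' : Rζ ∘L (l • (1 : H →L[ℂ] H) + Aζ) = 1)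
    (hLyap : A ∘L X + X ∘L Aζ + (B ∘L σ₁) ∘L C = 0) :
    ((1 : (Fin 2 → ℂ) →L[ℂ] (Fin 2 → ℂ)) - C ∘L (Xinv ∘L (R ∘L (B ∘L σ₁)))) ∘L
        ((1 : (Fin 2 → ℂ) →L[ℂ] (Fin 2 → ℂ)) + C ∘L (Rζ ∘L (Xinv ∘L (B ∘L σ₁)))) = 1 ∧
      ((1 : (Fin 2 → ℂ) →L[ℂ] (Fin 2 → ℂ)) + C ∘L (Rζ ∘L (Xinv ∘L (B ∘L σ₁)))) ∘L
        ((1 : (Fin 2 → ℂ) →L[ℂ] (Fin 2 → ℂ)) - C ∘L (Xinv ∘L (R ∘L (B ∘L σ₁)))) = 1 := by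
  have hPKQ := lyapunov_resolvent_sandwich_left hX hXinv hR' hRζ hLyap
  have hQKP := lyapunov_resolvent_sandwich_right hX hXinv hR hRζ' hLyap
  exact ⟨one_sub_comp_one_add_eq_one (P := Xinv ∘L R) (Q := Rζ ∘L Xinv) hPKQ,
    one_add_comp_one_sub_eq_one (P := Xinv ∘L R) (Q := Rζ ∘L Xinv) hQKP⟩

/-- **Inverse of the transfer function.**  If the Lyapunov equation holds and
`λI - A`, `λI + A_ζ`, `X` are invertible, then
`S(λ) = I - C X⁻¹ (λI - A)⁻¹ B σ₁` has two-sided inverse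
`T(λ) = I + C (λI + A_ζ)⁻¹ X⁻¹ B σ₁`. -/
theorem transfer_function_inverse
    {H : Type*} [NormedAddCommGroup H] [InnerProductSpace ℂ H] [CompleteSpace H]
    (σ₁ : (Fin 2 → ℂ) →L[ℂ] (Fin 2 → ℂ))
    (σ₁inv : (Fin 2 → ℂ) →L[ℂ] (Fin 2 → ℂ))
    (hσ₁ : σ₁ ∘L σ₁inv = 1) (hσ₁inv : σ₁inv ∘L σ₁ = 1)
    (A Aζ X Xinv : H →L[ℂ] H)
    (hX : X ∘L Xinv = 1) (hXinv : Xinv ∘L X = 1)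
    (B : (Fin 2 → ℂ) →L[ℂ] H) (C : H →L[ℂ] (Fin 2 → ℂ))
    (l : ℂ) (R Rζ : H →L[ℂ] H)
    (hR : (l • (1 : H →L[ℂ] H) - A) ∘L R = 1)
    (hR' : R ∘L (l • (1 : H →L[ℂ] H) - A) = 1)
    (hRζ : (l • (1 : H →L[ℂ] H) + Aζ) ∘L Rζ = 1)
    (hRζ' : Rζ ∘L (l • (1 : H →L[ℂ] H) + Aζ) = 1)
    (hLyap : A ∘L X + X ∘L Aζ + (B ∘L σ₁) ∘L C = 0) :
    ((1 : (Fin 2 → ℂ) →L[ℂ] (Fin 2 → ℂ)) - C ∘L (Xinv ∘L (R ∘L (B ∘L σ₁)))) ∘L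
        ((1 : (Fin 2 → ℂ) →L[ℂ] (Fin 2 → ℂ)) + C ∘L (Rζ ∘L (Xinv ∘L (B ∘L σ₁)))) = 1 ∧
      ((1 : (Fin 2 → ℂ) →L[ℂ] (Fin 2 → ℂ)) + C ∘L (Rζ ∘L (Xinv ∘L (B ∘L σ₁)))) ∘L
        ((1 : (Fin 2 → ℂ) →L[ℂ] (Fin 2 → ℂ)) - C ∘L (Xinv ∘L (R ∘L (B ∘L σ₁)))) = 1 :=
  transfer_function_inverse_general σ₁ A Aζ X Xinv hX hXinv B C l R Rζ hR hR' hRζ hRζ' hLyap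
end

section
/- Differential equation for the transfer function: in the bounded vessel setting, let λ ∈ ℂ be such that λ·I − A is invertible and define S(λ,x) := I − C(x)∘X(x)⁻¹∘(λ·I − A)⁻¹∘B(x)∘σ₁. Then x ↦ S(λ,x) is differentiable and ∂ₓ S(λ,x) = σ₁⁻¹ (λ σ₂ + γ*(x)) S(λ,x) − S(λ,x) σ₁⁻¹ (λ σ₂ + γ) for all x ∈ ℝ. -/
/-!
Differentiate `S = 1 - C X⁻¹ R B σ₁` (with `R = (λ - A)⁻¹`) by the product rule, using
`(X⁻¹)' = -X⁻¹ X' X⁻¹`. Conjugating the Lyapunov equation by `X⁻¹` gives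
`A_ζ X⁻¹ = -X⁻¹ A - X⁻¹ B σ₁ C X⁻¹`, and the resolvent identities `A R = R A = λ R - 1` remove every
remaining `A` and `A_ζ`. Both sides are then the same noncommutative polynomial in `σ₁, σ₁⁻¹, σ₂, γ`
and the two blocks `C X⁻¹ R B` and `C X⁻¹ B`.
-/

open ContinuousLinearMap

noncomputable def gammaStar {H : Type*} [NormedAddCommGroup H] [NormedSpace ℂ H]
    (σ₁ σ₂ γ : (Fin 2 → ℂ) →L[ℂ] (Fin 2 → ℂ))
    (B : ℝ → ((Fin 2 → ℂ) →L[ℂ] H)) (C : ℝ → (H →L[ℂ] (Fin 2 → ℂ)))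
    (Xinv : ℝ → (H →L[ℂ] H)) (x : ℝ) : (Fin 2 → ℂ) →L[ℂ] (Fin 2 → ℂ) :=
  γ + σ₂ ∘L (((C x ∘L Xinv x) ∘L B x) ∘L σ₁) - σ₁ ∘L (((C x ∘L Xinv x) ∘L B x) ∘L σ₂)

/-- The transfer function `S(λ, x) = I - C(x) X(x)⁻¹ (λI - A)⁻¹ B(x) σ₁`,
with `R = (λI - A)⁻¹`. -/
noncomputable def transferS {H : Type*} [NormedAddCommGroup H] [NormedSpace ℂ H]
    (σ₁ : (Fin 2 → ℂ) →L[ℂ] (Fin 2 → ℂ))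
    (B : ℝ → ((Fin 2 → ℂ) →L[ℂ] H)) (C : ℝ → (H →L[ℂ] (Fin 2 → ℂ)))
    (Xinv : ℝ → (H →L[ℂ] H)) (R : H →L[ℂ] H) (x : ℝ) :
    (Fin 2 → ℂ) →L[ℂ] (Fin 2 → ℂ) :=
  1 - C x ∘L (Xinv x ∘L (R ∘L (B x ∘L σ₁)))

theorem HasDerivAt.clm_comp_of_tower {𝕜 𝕜' : Type*} [NontriviallyNormedField 𝕜]
    [NontriviallyNormedField 𝕜'] [NormedAlgebra 𝕜 𝕜'] {E F G : Type*}
    [NormedAddCommGroup E] [NormedSpace 𝕜' E]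
    [NormedAddCommGroup F] [NormedSpace 𝕜' F] [NormedSpace 𝕜 F] [IsScalarTower 𝕜 𝕜' F]
    [NormedAddCommGroup G] [NormedSpace 𝕜' G] [NormedSpace 𝕜 G] [IsScalarTower 𝕜 𝕜' G]
    {c : 𝕜 → F →L[𝕜'] G} {d : 𝕜 → E →L[𝕜'] F} {c' : F →L[𝕜'] G} {d' : E →L[𝕜'] F} {x : 𝕜}
    (hc : HasDerivAt c c' x) (hd : HasDerivAt d d' x) :
    HasDerivAt (fun y => c y ∘L d y) (c' ∘L d x + c x ∘L d') x := by
  have := ((compL 𝕜' E F G).bilinearRestrictScalars 𝕜).hasDerivAt_of_bilinear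
    (fun _ => hc) (fun _ => hd)
  simpa [add_comm] using this

theorem HasDerivAt.inverse_of_mul_eq_one {𝕜 R : Type*} [NontriviallyNormedField 𝕜] [NormedRing R]
    [NormedAlgebra 𝕜 R] [HasSummableGeomSeries R] {X Y : 𝕜 → R} {X' : R} {x : 𝕜}
    (hXY : ∀ z, X z * Y z = 1) (hYX : ∀ z, Y z * X z = 1) (hX : HasDerivAt X X' x) :
    HasDerivAt Y (-(Y x * X' * Y x)) x := by
  let u : 𝕜 → Rˣ := fun z => ⟨X z, Y z, hXY z, hYX z⟩
  have hY : Y = fun z => Ring.inverse (X z) := funext fun z => (Ring.inverse_unit (u z)).symm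
  subst hY
  simpa [u, mulLeftRight_apply, Function.comp_def] using
    ((hasFDerivAt_ringInverse (𝕜 := 𝕜) (u x)).comp_hasDerivAt x hX)

theorem mul_eq_smul_sub_one_of_smul_one_sub_mul_eq_one {𝕜 R : Type*} [CommSemiring 𝕜] [Ring R]
    [Algebra 𝕜 R] {l : 𝕜} {a r : R} (h : (l • 1 - a) * r = 1) : a * r = l • r - 1 := by
  rw [← h, sub_mul, smul_mul_assoc, one_mul, sub_sub_cancel]

theorem mul_eq_smul_sub_one_of_mul_smul_one_sub_eq_one {𝕜 R : Type*} [CommSemiring 𝕜] [Ring R]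
    [Algebra 𝕜 R] {l : 𝕜} {a r : R} (h : r * (l • 1 - a) = 1) : r * a = l • r - 1 := by
  rw [← h, mul_sub, mul_smul_comm, mul_one, sub_sub_cancel]

theorem mul_right_eq_of_sylvester {R : Type*} [Ring R] {a b p x y : R}
    (h : a * x + x * b + p = 0) (hxy : x * y = 1) (hyx : y * x = 1) :
    b * y = -(y * a) - y * p * y := by
  have hxb : x * b = -(a * x) - p := by rw [← sub_eq_zero, ← h]; abel
  calc b * y = y * (x * b) * y := by rw [← mul_assoc, hyx, one_mul]
    _ = -(y * a) - y * p * y := by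
      simp only [hxb, mul_sub, sub_mul, mul_neg, neg_mul, mul_assoc, hxy, mul_one]

section TransferFunction

variable {H : Type*} [NormedAddCommGroup H] [NormedSpace ℂ H]
  {σ₁ σ₁inv σ₂ γ : (Fin 2 → ℂ) →L[ℂ] (Fin 2 → ℂ)} {A Aζ R : H →L[ℂ] H}
  {B : ℝ → ((Fin 2 → ℂ) →L[ℂ] H)} {C : ℝ → (H →L[ℂ] (Fin 2 → ℂ))} {Xinv : ℝ → (H →L[ℂ] H)}

theorem hasDerivAt_transferS {B' : (Fin 2 → ℂ) →L[ℂ] H} {C' : H →L[ℂ] (Fin 2 → ℂ)}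
    {Xinv' : H →L[ℂ] H} {x : ℝ}
    (hB : HasDerivAt B B' x) (hC : HasDerivAt C C' x) (hXinv : HasDerivAt Xinv Xinv' x) :
    HasDerivAt (transferS σ₁ B C Xinv R)
      (-(C' ∘L Xinv x ∘L R ∘L B x ∘L σ₁ + C x ∘L Xinv' ∘L R ∘L B x ∘L σ₁
        + C x ∘L Xinv x ∘L R ∘L B' ∘L σ₁)) x := by
  have hRBσ :=
    (hasDerivAt_const x R).clm_comp_of_tower (hB.clm_comp_of_tower (hasDerivAt_const x σ₁))
  have h := (hasDerivAt_const x 1).sub (hC.clm_comp_of_tower (hXinv.clm_comp_of_tower hRBσ))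
  refine h.congr_deriv ?_
  simp only [zero_comp, comp_zero, comp_add, zero_add, add_zero, zero_sub]
  abel

theorem transferS_deriv_eq (hσ₁ : σ₁ ∘L σ₁inv = 1) (hσ₁inv : σ₁inv ∘L σ₁ = 1) {l : ℂ} {x : ℝ}
    (hAζ : Aζ ∘L Xinv x = -(Xinv x ∘L A) - Xinv x ∘L ((B x ∘L σ₁) ∘L C x) ∘L Xinv x)
    (hAR : A ∘L R = l • R - 1) (hRA : R ∘L A = l • R - 1) :
    -((σ₁inv ∘L (-(σ₂ ∘L (C x ∘L Aζ)) + γ ∘L C x)) ∘L Xinv x ∘L R ∘L B x ∘L σ₁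
        + C x ∘L (-((Xinv x ∘L ((B x ∘L σ₂) ∘L C x)) ∘L Xinv x)) ∘L R ∘L B x ∘L σ₁
        + C x ∘L Xinv x ∘L R ∘L ((-((A ∘L B x) ∘L σ₂ + B x ∘L γ)) ∘L σ₁inv) ∘L σ₁) =
      σ₁inv ∘L ((l • σ₂ + gammaStar σ₁ σ₂ γ B C Xinv x) ∘L transferS σ₁ B C Xinv R x) -
        transferS σ₁ B C Xinv R x ∘L (σ₁inv ∘L (l • σ₂ + γ)) := by
  have eσ₁ : ∀ w : (Fin 2 → ℂ) →L[ℂ] (Fin 2 → ℂ), σ₁ ∘L σ₁inv ∘L w = w := fun w => by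
    rw [← comp_assoc, hσ₁, one_def, id_comp]
  have eσ₁inv : ∀ w : (Fin 2 → ℂ) →L[ℂ] (Fin 2 → ℂ), σ₁inv ∘L σ₁ ∘L w = w := fun w => by
    rw [← comp_assoc, hσ₁inv, one_def, id_comp]
  have eAζ : ∀ w : (Fin 2 → ℂ) →L[ℂ] H,
      Aζ ∘L Xinv x ∘L w = -(Xinv x ∘L A ∘L w) - Xinv x ∘L B x ∘L σ₁ ∘L C x ∘L Xinv x ∘L w :=
    fun w => by rw [← comp_assoc, hAζ]; simp only [sub_comp, neg_comp, comp_assoc]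
  have eAR : ∀ w : (Fin 2 → ℂ) →L[ℂ] H, A ∘L R ∘L w = l • (R ∘L w) - w := fun w => by
    rw [← comp_assoc, hAR, sub_comp, smul_comp, one_def, id_comp]
  have eRA : ∀ w : (Fin 2 → ℂ) →L[ℂ] H, R ∘L A ∘L w = l • (R ∘L w) - w := fun w => by
    rw [← comp_assoc, hRA, sub_comp, smul_comp, one_def, id_comp]
  simp only [transferS, gammaStar, comp_add, add_comp, comp_sub, sub_comp, comp_neg, neg_comp,
    smul_comp, comp_smul, comp_assoc, one_def, id_comp, comp_id, hσ₁inv, eσ₁, eσ₁inv,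
    eAζ, eAR, eRA]
  module

end TransferFunction

/-- **Differential equation for the transfer function:**
`∂ₓ S(λ,x) = σ₁⁻¹ (λσ₂ + γ*(x)) S(λ,x) - S(λ,x) σ₁⁻¹ (λσ₂ + γ)`. -/
theorem transfer_function_ODE
    {H : Type*} [NormedAddCommGroup H] [InnerProductSpace ℂ H] [CompleteSpace H]
    (σ₁ σ₁inv σ₂ γ : (Fin 2 → ℂ) →L[ℂ] (Fin 2 → ℂ))
    (hσ₁ : σ₁ ∘L σ₁inv = 1) (hσ₁inv : σ₁inv ∘L σ₁ = 1)
    (A Aζ : H →L[ℂ] H)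
    (B : ℝ → ((Fin 2 → ℂ) →L[ℂ] H))
    (C : ℝ → (H →L[ℂ] (Fin 2 → ℂ)))
    (X Xinv : ℝ → (H →L[ℂ] H))
    (hXinv : ∀ x : ℝ, X x ∘L Xinv x = 1) (hXinv' : ∀ x : ℝ, Xinv x ∘L X x = 1)
    (hB : ∀ x : ℝ, HasDerivAt B ((-((A ∘L B x) ∘L σ₂ + B x ∘L γ)) ∘L σ₁inv) x)
    (hC : ∀ x : ℝ, HasDerivAt C (σ₁inv ∘L (-(σ₂ ∘L (C x ∘L Aζ)) + γ ∘L C x)) x)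
    (hX : ∀ x : ℝ, HasDerivAt X ((B x ∘L σ₂) ∘L C x) x)
    (hLyap : ∀ x : ℝ, A ∘L X x + X x ∘L Aζ + (B x ∘L σ₁) ∘L C x = 0)
    (l : ℂ) (R : H →L[ℂ] H)
    (hR : (l • (1 : H →L[ℂ] H) - A) ∘L R = 1)
    (hR' : R ∘L (l • (1 : H →L[ℂ] H) - A) = 1) :
    ∃ S' : ℝ → ((Fin 2 → ℂ) →L[ℂ] (Fin 2 → ℂ)),
      (∀ x : ℝ, HasDerivAt (fun z => transferS σ₁ B C Xinv R z) (S' x) x) ∧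
      ∀ x : ℝ, S' x =
        σ₁inv ∘L ((l • σ₂ + gammaStar σ₁ σ₂ γ B C Xinv x) ∘L transferS σ₁ B C Xinv R x) -
          transferS σ₁ B C Xinv R x ∘L (σ₁inv ∘L (l • σ₂ + γ)) := by
  have hAR : A ∘L R = l • R - 1 := mul_eq_smul_sub_one_of_smul_one_sub_mul_eq_one hR
  have hRA : R ∘L A = l • R - 1 := mul_eq_smul_sub_one_of_mul_smul_one_sub_eq_one hR'
  refine ⟨_, fun x => ?_, fun x => rfl⟩
  have hXinvDeriv := (hX x).inverse_of_mul_eq_one hXinv hXinv'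
  have hAζ := mul_right_eq_of_sylvester (hLyap x) (hXinv x) (hXinv' x)
  exact (hasDerivAt_transferS (hB x) (hC x) hXinvDeriv).congr_deriv
    (transferS_deriv_eq hσ₁ hσ₁inv hAζ hAR hRA)
end

section
/- Tau-function form of the linkage matrix for Sturm–Liouville parameters: let the inner space be finite dimensional, H = ℂᵏ, and suppose the matrix-valued functions B : ℝ → Hom(ℂ², ℂᵏ), C : ℝ → Hom(ℂᵏ, ℂ²), X : ℝ → Hom(ℂᵏ, ℂᵏ) are differentiable and satisfy, with the Sturm–Liouville vessel parameters, B'(x) = -(A B(x) σ₂ + B(x) γ) σ₁⁻¹, C'(x) = σ₁⁻¹(-σ₂ C(x) A_ζ + γ C(x)), X'(x) = B(x) σ₂ C(x), the Lyapunov equation A X(x) + X(x) A_ζ + B(x) σ₁ C(x) = 0, and X(x) is invertible for all x. Set τ(x) := det X(x) and γ*(x) := γ + σ₂ C(x) X(x)⁻¹ B(x) σ₁ − σ₁ C(x) X(x)⁻¹ B(x) σ₂. Then τ(x) ≠ 0, τ is twice differentiable, and γ*(x) = [[i τ''(x)/τ(x), τ'(x)/τ(x)], [−τ'(x)/τ(x),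 i]] for all x ∈ ℝ. -/
/-!
Put `W = C X⁻¹ B`. Jacobi's formula together with `X' = B σ₂ C` gives `τ' = τ W₀₀`.
Differentiating `W` along the vessel equations, the terms containing `A` and `A_ζ` enter only
through `σ₁ σ₂` and `σ₂ σ₁`, whose first row resp. first column vanish, so the `(0,0)` entry obeys
the Riccati equation `W₀₀' = i (W₁₀ - W₀₁) - W₀₀²`. Hence `τ'' = i τ (W₁₀ - W₀₁)`, while a direct
`2 × 2` computation gives `γ* = [[W₀₁ - W₁₀, W₀₀], [-W₀₀, i]]`.
-/

def SLσ₁ : Matrix (Fin 2) (Fin 2) ℂ := !![0, 1; 1, 0]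

def SLσ₂ : Matrix (Fin 2) (Fin 2) ℂ := !![1, 0; 0, 0]

noncomputable def SLγ : Matrix (Fin 2) (Fin 2) ℂ := !![0, 0; 0, Complex.I]

open Matrix

section MatrixCalculus

variable {𝕜 R : Type*} [NontriviallyNormedField 𝕜] [NontriviallyNormedField R] [NormedAlgebra 𝕜 R]
  {m n p : Type*} {x : 𝕜}

section LinftyOp

attribute [local instance] Matrix.linftyOpNormedAddCommGroup Matrix.linftyOpNormedSpace
  Matrix.linftyOpNormedRing Matrix.linftyOpNormedAlgebra

theorem hasDerivAt_matrix_iff [Fintype m] [Fintype n] {M : 𝕜 → Matrix m n R}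
    {M' : Matrix m n R} :
    HasDerivAt M M' x ↔ ∀ i j, HasDerivAt (fun y => M y i j) (M' i j) x := by
  classical
  constructor
  · intro hM i j
    let entry : Matrix m n R →L[𝕜] R :=
      ⟨(entryLinearMap R R i j).restrictScalars 𝕜, (continuous_apply j).comp (continuous_apply i)⟩
    exact entry.hasFDerivAt.comp_hasDerivAt x hM
  · intro hM
    have hsum : ∀ N : Matrix m n R, N = ∑ i, ∑ j, N i j • single i j (1 : R) := fun N => by
      simpa only [smul_single, smul_eq_mul, mul_one] using matrix_eq_sum_single N
    rw [hsum M', show M = fun y => ∑ i, ∑ j, M y i j • single i j (1 : R) from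
      funext fun y => hsum (M y)]
    exact HasDerivAt.fun_sum fun i _ => HasDerivAt.fun_sum fun j _ => (hM i j).smul_const _

theorem HasDerivAt.matrix_inv [CompleteSpace R] [Fintype n] [DecidableEq n]
    {M : 𝕜 → Matrix n n R} {M' : Matrix n n R} (hM : HasDerivAt M M' x) (hU : IsUnit (M x)) :
    HasDerivAt (fun y => (M y)⁻¹) (-((M x)⁻¹ * M' * (M x)⁻¹)) x := by
  -- the norm `linftyOpNormedRing` induces the product uniformity of `Matrix`
  have : @CompleteSpace (Matrix n n R) Matrix.linftyOpNormedRing.toUniformSpace :=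
    instCompleteSpace n n R
  obtain ⟨u, hu⟩ := hU
  have hinv : ((u⁻¹ : (Matrix n n R)ˣ) : Matrix n n R) = (M x)⁻¹ := by
    rw [← hu, nonsing_inv_eq_ringInverse, Ring.inverse_unit]
  have h := (hu ▸ hasFDerivAt_ringInverse (𝕜 := 𝕜) u).comp_hasDerivAt x hM
  simp only [hinv, Function.comp_def, ← nonsing_inv_eq_ringInverse,
    _root_.neg_apply, ContinuousLinearMap.mulLeftRight_apply] at h
  exact h

end LinftyOp

theorem HasDerivAt.matrix_mul [Fintype m] [Fintype n] [Fintype p]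
    {M : 𝕜 → Matrix m n R} {N : 𝕜 → Matrix n p R} {M' : Matrix m n R} {N' : Matrix n p R}
    (hM : HasDerivAt M M' x) (hN : HasDerivAt N N' x) :
    HasDerivAt (fun y => M y * N y) (M' * N x + M x * N') x := by
  rw [hasDerivAt_matrix_iff] at hM hN ⊢
  intro i j
  simpa only [mul_apply, Matrix.add_apply, Finset.sum_add_distrib] using
    HasDerivAt.fun_sum fun l _ => (hM i l).fun_mul (hN l j)

theorem trace_adjugate_mul {α : Type*} [CommRing α] [Fintype n] [DecidableEq n]
    (A B : Matrix n n α) :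
    (A.adjugate * B).trace = ∑ j, (A.updateCol j fun i => B i j).det := by
  simp only [← cramer_apply, cramer_eq_adjugate_mulVec, trace, diag, mul_apply, mulVec,
    dotProduct]

theorem HasDerivAt.matrix_det [Fintype n] [DecidableEq n] {M : 𝕜 → Matrix n n R}
    {M' : Matrix n n R} (hM : HasDerivAt M M' x) :
    HasDerivAt (fun y => (M y).det) ((M x).adjugate * M').trace x := by
  rw [hasDerivAt_matrix_iff] at hM
  have hcol : ∀ j, ((M x).updateCol j fun i => M' i j).det = ∑ σ : Equiv.Perm n,
      Equiv.Perm.sign σ • ((∏ i ∈ Finset.univ.erase j, M x (σ i) i) * M' (σ j) j) := by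
    intro j
    rw [det_apply]
    refine Finset.sum_congr rfl fun σ _ => congrArg _ ?_
    rw [← Finset.prod_erase_mul _ _ (Finset.mem_univ j), updateCol_self]
    congr 1
    exact Finset.prod_congr rfl fun i hi => updateCol_ne (Finset.ne_of_mem_erase hi)
  simp only [trace_adjugate_mul, hcol]
  simp only [det_apply]
  rw [Finset.sum_comm]
  simp only [← Finset.smul_sum, ← smul_eq_mul]
  exact HasDerivAt.fun_sum fun σ _ =>
    (HasDerivAt.fun_finsetProd fun i _ => hM (σ i) i).const_smul _

theorem HasDerivAt.matrix_det_of_isUnit [Fintype n] [DecidableEq n] {M : 𝕜 → Matrix n n R}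
    {M' : Matrix n n R} (hM : HasDerivAt M M' x) (hU : IsUnit (M x)) :
    HasDerivAt (fun y => (M y).det) ((M x).det * ((M x)⁻¹ * M').trace) x := by
  have hadj : (M x).adjugate = (M x).det • (M x)⁻¹ := by
    rw [inv_def, smul_smul, Ring.mul_inverse_cancel _ ((isUnit_iff_isUnit_det _).mp hU), one_smul]
  simpa only [hadj, smul_mul, trace_smul, smul_eq_mul] using hM.matrix_det

end MatrixCalculus

section SturmLiouville

variable {n : Type*} [Fintype n]

theorem SLσ₁_inv : SLσ₁⁻¹ = SLσ₁ :=
  inv_eq_right_inv (by ext i j; fin_cases i <;> fin_cases j <;> simp [SLσ₁])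

theorem trace_mul_mul_SLσ₂_mul (Y : Matrix n n ℂ) (B : Matrix n (Fin 2) ℂ)
    (C : Matrix (Fin 2) n ℂ) : (Y * (B * SLσ₂ * C)).trace = (C * Y * B) 0 0 := by
  rw [← Matrix.mul_assoc, ← Matrix.mul_assoc, trace_mul_comm, ← Matrix.mul_assoc,
    ← Matrix.mul_assoc]
  generalize C * Y * B = W
  rw [eta_fin_two W]
  simp [SLσ₂, trace_fin_two]

theorem linkage_deriv_zero_zero (A Aζ Y : Matrix n n ℂ) (B : Matrix n (Fin 2) ℂ)
    (C : Matrix (Fin 2) n ℂ) :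
    ((SLσ₁⁻¹ * (-(SLσ₂ * C * Aζ) + SLγ * C) * Y + C * -(Y * (B * SLσ₂ * C) * Y)) * B +
        C * Y * (-(A * B * SLσ₂ + B * SLγ) * SLσ₁⁻¹)) 0 0 =
      Complex.I * (C * Y * B) 1 0 - (C * Y * B) 0 0 ^ 2 - Complex.I * (C * Y * B) 0 1 := by
  set W := C * Y * B
  have hexpand :
      (SLσ₁⁻¹ * (-(SLσ₂ * C * Aζ) + SLγ * C) * Y + C * -(Y * (B * SLσ₂ * C) * Y)) * B +
          C * Y * (-(A * B * SLσ₂ + B * SLγ) * SLσ₁⁻¹) =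
        -(SLσ₁ * SLσ₂ * (C * Aζ * Y * B)) + SLσ₁ * SLγ * W - W * SLσ₂ * W -
          C * Y * A * B * (SLσ₂ * SLσ₁) - W * (SLγ * SLσ₁) := by
    simp only [SLσ₁_inv, W, Matrix.mul_add, Matrix.add_mul, Matrix.mul_neg, Matrix.neg_mul,
      Matrix.mul_assoc]
    abel
  rw [hexpand]
  generalize C * Aζ * Y * B = N₁
  generalize C * Y * A * B = N₂
  rw [eta_fin_two W, eta_fin_two N₁, eta_fin_two N₂]
  simp [SLσ₁, SLσ₂, SLγ, sq, mul_comm]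

theorem linkage_eq (W : Matrix (Fin 2) (Fin 2) ℂ) :
    SLγ + SLσ₂ * W * SLσ₁ - SLσ₁ * W * SLσ₂ = !![W 0 1 - W 1 0, W 0 0; -W 0 0, Complex.I] := by
  rw [eta_fin_two W]
  simp [SLσ₁, SLσ₂, SLγ]

end SturmLiouville

theorem sl_linkage_tau_form_general (k : ℕ)
    (A Aζ : Matrix (Fin k) (Fin k) ℂ)
    (B : ℝ → Matrix (Fin k) (Fin 2) ℂ) (B' : ℝ → Matrix (Fin k) (Fin 2) ℂ)
    (C : ℝ → Matrix (Fin 2) (Fin k) ℂ) (C' : ℝ → Matrix (Fin 2) (Fin k) ℂ)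
    (X : ℝ → Matrix (Fin k) (Fin k) ℂ) (X' : ℝ → Matrix (Fin k) (Fin k) ℂ)
    (hB : ∀ (x : ℝ) (i : Fin k) (j : Fin 2),
      HasDerivAt (fun y => B y i j) (B' x i j) x)
    (hC : ∀ (x : ℝ) (i : Fin 2) (j : Fin k),
      HasDerivAt (fun y => C y i j) (C' x i j) x)
    (hX : ∀ (x : ℝ) (i j : Fin k),
      HasDerivAt (fun y => X y i j) (X' x i j) x)
    (hBeq : ∀ x : ℝ, B' x = -(A * B x * SLσ₂ + B x * SLγ) * SLσ₁⁻¹)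
    (hCeq : ∀ x : ℝ, C' x = SLσ₁⁻¹ * (-(SLσ₂ * C x * Aζ) + SLγ * C x))
    (hXeq : ∀ x : ℝ, X' x = B x * SLσ₂ * C x)
    (hXinv : ∀ x : ℝ, IsUnit (X x)) :
    (∀ x : ℝ, (X x).det ≠ 0) ∧
    ∃ τ' τ'' : ℝ → ℂ,
      (∀ x : ℝ, HasDerivAt (fun y => (X y).det) (τ' x) x) ∧
      (∀ x : ℝ, HasDerivAt τ' (τ'' x) x) ∧
      ∀ x : ℝ,
        SLγ + SLσ₂ * (C x * (X x)⁻¹ * B x) * SLσ₁ - SLσ₁ * (C x * (X x)⁻¹ * B x) * SLσ₂ =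
          !![Complex.I * τ'' x / (X x).det, τ' x / (X x).det;
             -(τ' x / (X x).det), Complex.I] := by
  have hdet : ∀ x, (X x).det ≠ 0 := fun x => ((isUnit_iff_isUnit_det _).mp (hXinv x)).ne_zero
  have hXd : ∀ x, HasDerivAt X (X' x) x := fun x => hasDerivAt_matrix_iff.2 (hX x)
  set W : ℝ → Matrix (Fin 2) (Fin 2) ℂ := fun y => C y * (X y)⁻¹ * B y
  have hW : ∀ x, HasDerivAt W ((C' x * (X x)⁻¹ + C x * -((X x)⁻¹ * X' x * (X x)⁻¹)) * B x
      + C x * (X x)⁻¹ * B' x) x := fun x =>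
    ((hasDerivAt_matrix_iff.2 (hC x)).matrix_mul ((hXd x).matrix_inv (hXinv x))).matrix_mul
      (hasDerivAt_matrix_iff.2 (hB x))
  have hτ : ∀ x, HasDerivAt (fun y => (X y).det) ((X x).det * W x 0 0) x := fun x => by
    simpa only [hXeq x, trace_mul_mul_SLσ₂_mul] using (hXd x).matrix_det_of_isUnit (hXinv x)
  refine ⟨hdet, fun x => (X x).det * W x 0 0,
    fun x => Complex.I * ((X x).det * (W x 1 0 - W x 0 1)), hτ, fun x => ?_, fun x => ?_⟩
  · refine ((hτ x).mul (hasDerivAt_matrix_iff.1 (hW x) 0 0)).congr_deriv ?_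
    rw [hCeq x, hBeq x, hXeq x, linkage_deriv_zero_zero]
    ring
  · have hx := hdet x
    rw [linkage_eq]
    simp only [W, ← mul_assoc, Complex.I_mul_I]
    field_simp
    ring_nf

/-- **Tau-function form of the linkage matrix for Sturm–Liouville parameters**
(finite-dimensional inner space `ℂᵏ`): with `τ = det X`,
`γ* = [[i τ''/τ, τ'/τ], [-τ'/τ, i]]`. -/
theorem sl_linkage_tau_form (k : ℕ)
    (A Aζ : Matrix (Fin k) (Fin k) ℂ)
    (B : ℝ → Matrix (Fin k) (Fin 2) ℂ) (B' : ℝ → Matrix (Fin k) (Fin 2) ℂ)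
    (C : ℝ → Matrix (Fin 2) (Fin k) ℂ) (C' : ℝ → Matrix (Fin 2) (Fin k) ℂ)
    (X : ℝ → Matrix (Fin k) (Fin k) ℂ) (X' : ℝ → Matrix (Fin k) (Fin k) ℂ)
    (hB : ∀ (x : ℝ) (i : Fin k) (j : Fin 2),
      HasDerivAt (fun y => B y i j) (B' x i j) x)
    (hC : ∀ (x : ℝ) (i : Fin 2) (j : Fin k),
      HasDerivAt (fun y => C y i j) (C' x i j) x)
    (hX : ∀ (x : ℝ) (i j : Fin k),
      HasDerivAt (fun y => X y i j) (X' x i j) x)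
    (hBeq : ∀ x : ℝ, B' x = -(A * B x * SLσ₂ + B x * SLγ) * SLσ₁⁻¹)
    (hCeq : ∀ x : ℝ, C' x = SLσ₁⁻¹ * (-(SLσ₂ * C x * Aζ) + SLγ * C x))
    (hXeq : ∀ x : ℝ, X' x = B x * SLσ₂ * C x)
    (hLyap : ∀ x : ℝ, A * X x + X x * Aζ + B x * SLσ₁ * C x = 0)
    (hXinv : ∀ x : ℝ, IsUnit (X x)) :
    (∀ x : ℝ, (X x).det ≠ 0) ∧
    ∃ τ' τ'' : ℝ → ℂ,
      (∀ x : ℝ, HasDerivAt (fun y => (X y).det) (τ' x) x) ∧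
      (∀ x : ℝ, HasDerivAt τ' (τ'' x) x) ∧
      ∀ x : ℝ,
        SLγ + SLσ₂ * (C x * (X x)⁻¹ * B x) * SLσ₁ - SLσ₁ * (C x * (X x)⁻¹ * B x) * SLσ₂ =
          !![Complex.I * τ'' x / (X x).det, τ' x / (X x).det;
             -(τ' x / (X x).det), Complex.I] :=
  sl_linkage_tau_form_general k A Aζ B B' C C' X X' hB hC hX hBeq hCeq hXeq hXinv
end

section
/- Output compatibility equivalence for Sturm–Liouville parameters: let τ : ℝ → ℂ be twice differentiable with τ(x) ≠ 0 for all x, assume τ'/τ is differentiable, and set γ*(x) := [[i τ''(x)/τ(x), τ'(x)/τ(x)], [−τ'(x)/τ(x), i]]. Let λ ∈ ℂ and y = (y₁, y₂) : ℝ → ℂ² be differentiable. Then λ σ₂ y(x) − σ₁ y'(x) + γ*(x) y(x) = 0 for all x ∈ ℝ if and only if y₂ = −i (y₁' + (τ'/τ) y₁), y₁ is twice differentiable, and −y₁''(x) − 2 (d²/dx²)[log τ](x) · y₁(x) = −iλ y₁(x) for all x, where (d²/dx²)[log τ] = (τ'/τ)' denotes the derivative of τ'/τ. -/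
open Complex

theorem output_mulVec_eq_zero_iff (l a b c d : ℂ) (v v' : Fin 2 → ℂ) :
    l • SLσ₂.mulVec v - SLσ₁.mulVec v' + (!![a, b; c, d] : Matrix (Fin 2) (Fin 2) ℂ).mulVec v = 0 ↔
      l * v 0 - v' 1 + (a * v 0 + b * v 1) = 0 ∧ -v' 0 + (c * v 0 + d * v 1) = 0 := by
  simp [funext_iff, Fin.forall_fin_two, SLσ₁, SLσ₂, dotProduct, Fin.sum_univ_two]

theorem output_second_component_iff (u u' v q : ℂ) :
    -u' + (-q * u + I * v) = 0 ↔ v = -I * (u' + q * u) := by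
  constructor <;> intro h
  · linear_combination -I * h + v * I_sq
  · linear_combination I * h - (u' + q * u) * I_sq

theorem output_first_component_iff {l u v u' v' q t t'' L w : ℂ}
    (hv : v = -I * (u' + q * u)) (hL : L = t'' / t - q ^ 2) (hw : w = I * v' - L * u - q * u') :
    l * u - v' + (I * t'' / t * u + q * v) = 0 ↔ -w - 2 * L * u = -I * l * u := by
  subst hv hL hw
  constructor <;> intro h
  · linear_combination I * h + (-t'' / t * u + q * u' + q ^ 2 * u) * I_sq
  · linear_combination -I * h + (l * u - v') * I_sq

theorem HasDerivAt.eq_div_sub_sq_of_div {𝕜 𝕜' : Type*} [NontriviallyNormedField 𝕜]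
    [NontriviallyNormedField 𝕜'] [NormedAlgebra 𝕜 𝕜'] {f f' f'' : 𝕜 → 𝕜'} {L : 𝕜'} {x : 𝕜}
    (hf : HasDerivAt f (f' x) x) (hf' : HasDerivAt f' (f'' x) x) (hx : f x ≠ 0)
    (hL : HasDerivAt (fun s => f' s / f s) L x) :
    L = f'' x / f x - (f' x / f x) ^ 2 := by
  rw [hL.unique (hf'.div hf hx)]
  field_simp

theorem hasDerivAt_of_eq_neg_I_mul_add {𝕜 : Type*} [NontriviallyNormedField 𝕜]
    [NormedAlgebra 𝕜 ℂ] {u v u' q : 𝕜 → ℂ} {v' L : ℂ} {x : 𝕜}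
    (hu : HasDerivAt u (u' x) x) (hv : HasDerivAt v v' x) (hq : HasDerivAt q L x)
    (h : ∀ s, v s = -I * (u' s + q s * u s)) :
    HasDerivAt u' (I * v' - L * u x - q x * u' x) x := by
  have hu' : u' = fun s => I * v s - q s * u s := by
    funext s
    linear_combination -I * h s + (u' s + q s * u s) * I_sq
  have hd : HasDerivAt (fun s => I * v s - q s * u s) (I * v' - (L * u x + q x * u' x)) x :=
    (hv.const_mul I).sub (hq.mul hu)
  rw [← hu'] at hd
  exact hd.congr_deriv (by ring)

/-- **Output compatibility equivalence for Sturm–Liouville parameters:**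
with `γ*(x) = [[i τ''/τ, τ'/τ],[-τ'/τ, i]]`, the output ODE
`λ σ₂ y - σ₁ y' + γ* y = 0` holds iff `y₂ = -i (y₁' + (τ'/τ) y₁)`, `y₁` is
twice differentiable and `-y₁'' - 2 (τ'/τ)' y₁ = -iλ y₁`. -/
theorem sl_output_compatibility_equiv
    (τ τ' τ'' Lτ : ℝ → ℂ)
    (hτ : ∀ x : ℝ, HasDerivAt τ (τ' x) x)
    (hτ' : ∀ x : ℝ, HasDerivAt τ' (τ'' x) x)
    (hτ0 : ∀ x : ℝ, τ x ≠ 0)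
    (hLτ : ∀ x : ℝ, HasDerivAt (fun y => τ' y / τ y) (Lτ x) x)
    (l : ℂ) (y y' : ℝ → (Fin 2 → ℂ))
    (hy : ∀ x : ℝ, HasDerivAt y (y' x) x) :
    (∀ x : ℝ,
        l • SLσ₂.mulVec (y x) - SLσ₁.mulVec (y' x) +
          (!![Complex.I * τ'' x / τ x, τ' x / τ x;
              -(τ' x / τ x), Complex.I] : Matrix (Fin 2) (Fin 2) ℂ).mulVec (y x) = 0) ↔
      ((∀ x : ℝ, y x 1 = -Complex.I * (y' x 0 + (τ' x / τ x) * y x 0)) ∧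
        ∃ w : ℝ → ℂ, (∀ x : ℝ, HasDerivAt (fun s => y' s 0) (w x) x) ∧
          ∀ x : ℝ, -w x - 2 * Lτ x * y x 0 = -Complex.I * l * y x 0) := by
  have hy₀ x : HasDerivAt (fun s => y s 0) (y' x 0) x := hasDerivAt_pi.1 (hy x) 0
  have hy₁ x : HasDerivAt (fun s => y s 1) (y' x 1) x := hasDerivAt_pi.1 (hy x) 1
  have hL x := (hτ x).eq_div_sub_sq_of_div (hτ' x) (hτ0 x) (hLτ x)
  simp only [output_mulVec_eq_zero_iff, output_second_component_iff, forall_and]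
  constructor
  · rintro ⟨hfirst, hsecond⟩
    have hw x := hasDerivAt_of_eq_neg_I_mul_add (hy₀ x) (hy₁ x) (hLτ x) hsecond
    exact ⟨hsecond, _, hw,
      fun x => (output_first_component_iff (hsecond x) (hL x) rfl).1 (hfirst x)⟩
  · rintro ⟨hsecond, w, hw, hfirst⟩
    have hw_eq x := (hw x).unique (hasDerivAt_of_eq_neg_I_mul_add (hy₀ x) (hy₁ x) (hLτ x) hsecond)
    exact ⟨fun x => (output_first_component_iff (hsecond x) (hL x) (hw_eq x)).2 (hfirst x), hsecond⟩
end

section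
/- Uniqueness of the moments: let σ₁, σ₂, γ be 2×2 complex matrices with σ₁ invertible. Suppose H_n, H̃_n : ℝ → M₂(ℂ) (n ∈ ℕ) are differentiable for every n, that H₀ and H̃₀ are real-analytic on ℝ, and that with γ*(x) := γ + σ₂ H₀(x) σ₁ − σ₁ H₀(x) σ₂ and γ̃*(x) := γ + σ₂ H̃₀(x) σ₁ − σ₁ H̃₀(x) σ₂ the recursions H_n'(x) = σ₁⁻¹σ₂ H_{n+1}(x) − H_{n+1}(x) σ₂σ₁⁻¹ + σ₁⁻¹γ*(x) H_n(x) − H_n(x) γ σ₁⁻¹ and H̃_n'(x) = σ₁⁻¹σ₂ H̃_{n+1}(x) − H̃_{n+1}(x) σ₂σ₁⁻¹ + σ₁⁻¹γ̃*(x) H̃_n(x) − H̃_n(x) γ σ₁⁻¹ hold for all n and x. If H_n(0) = H̃_n(0) for every n ∈ ℕ, then H₀(x) = H̃₀(x) for all x ∈ ℝ, and consequently γ*(x) = γ̃*(x) for all x ∈ ℝ. -/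
/-!
If two solutions of the moment recursion agree at `0`, then by induction on `k` all their
moments agree to order `k` at `0`: the `(k+1)`-st derivative of `Hₙ - H̃ₙ` is the `k`-th
derivative of the difference of the right-hand sides, which by the Leibniz rule only involves
derivatives of order `≤ k` of `Hₙ₊₁ - H̃ₙ₊₁`, `H₀ - H̃₀` and `Hₙ - H̃ₙ` (all moments are smooth,
since the recursion expresses `H'ₙ` polynomially in the moments). Thus the real-analytic
function `H₀ - H̃₀` has all derivatives zero at `0` and vanishes identically.
-/

open scoped ContDiff

section VanishesToOrder

variable {𝕜 E 𝔸 : Type*} [NontriviallyNormedField 𝕜] [NormedAddCommGroup E] [NormedSpace 𝕜 E]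
  [NormedRing 𝔸] [NormedAlgebra 𝕜 𝔸] {k : ℕ} {x : 𝕜}

/-- Indexed like `analyticOrderAt`: for analytic `f`, this says `k ≤ analyticOrderAt f x`. -/
def VanishesToOrder (k : ℕ) (f : 𝕜 → E) (x : 𝕜) : Prop :=
  ∀ m < k, iteratedDeriv m f x = 0

theorem vanishesToOrder_zero (f : 𝕜 → E) (x : 𝕜) : VanishesToOrder 0 f x :=
  fun _ hm => absurd hm (Nat.not_lt_zero _)

theorem vanishesToOrder_succ_iff {f : 𝕜 → E} :
    VanishesToOrder (k + 1) f x ↔ f x = 0 ∧ VanishesToOrder k (deriv f) x := by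
  simp [VanishesToOrder, -Order.lt_add_one_iff, Nat.forall_lt_succ_left, iteratedDeriv_succ']

theorem VanishesToOrder.add {f g : 𝕜 → E} (hf₀ : VanishesToOrder k f x)
    (hg₀ : VanishesToOrder k g x) (hf : ContDiffAt 𝕜 k f x) (hg : ContDiffAt 𝕜 k g x) :
    VanishesToOrder k (fun y => f y + g y) x := fun m hm => by
  rw [iteratedDeriv_fun_add (hf.of_le (mod_cast hm.le)) (hg.of_le (mod_cast hm.le)),
    hf₀ m hm, hg₀ m hm, add_zero]

theorem VanishesToOrder.sub {f g : 𝕜 → E} (hf₀ : VanishesToOrder k f x)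
    (hg₀ : VanishesToOrder k g x) (hf : ContDiffAt 𝕜 k f x) (hg : ContDiffAt 𝕜 k g x) :
    VanishesToOrder k (fun y => f y - g y) x := fun m hm => by
  rw [iteratedDeriv_fun_sub (hf.of_le (mod_cast hm.le)) (hg.of_le (mod_cast hm.le)),
    hf₀ m hm, hg₀ m hm, sub_zero]

theorem VanishesToOrder.mul_left {f g : 𝕜 → 𝔸} (hg₀ : VanishesToOrder k g x)
    (hf : ContDiffAt 𝕜 k f x) (hg : ContDiffAt 𝕜 k g x) :
    VanishesToOrder k (fun y => f y * g y) x := fun m hm => by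
  rw [iteratedDeriv_fun_mul (hf.of_le (mod_cast hm.le)) (hg.of_le (mod_cast hm.le))]
  exact Finset.sum_eq_zero fun i _ => by rw [hg₀ (m - i) (by omega), mul_zero]

theorem VanishesToOrder.mul_right {f g : 𝕜 → 𝔸} (hf₀ : VanishesToOrder k f x)
    (hf : ContDiffAt 𝕜 k f x) (hg : ContDiffAt 𝕜 k g x) :
    VanishesToOrder k (fun y => f y * g y) x := fun m hm => by
  rw [iteratedDeriv_fun_mul (hf.of_le (mod_cast hm.le)) (hg.of_le (mod_cast hm.le))]
  refine Finset.sum_eq_zero fun i hi => ?_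
  rw [hf₀ i (by simp at hi; omega), mul_zero, zero_mul]

theorem eq_zero_of_forall_vanishesToOrder [CharZero 𝕜] [PreconnectedSpace 𝕜] [CompleteSpace E]
    {f : 𝕜 → E} (hf : ∀ y, AnalyticAt 𝕜 f y) (h : ∀ k, VanishesToOrder k f x) : f = 0 :=
  (AnalyticOnNhd.analyticOrderAt_eq_top_iff_eq_zero x hf).mp <|
    ENat.eq_top_iff_forall_ge.mpr fun k =>
      (natCast_le_analyticOrderAt_iff_iteratedDeriv_eq_zero (hf x)).mpr (h k)

end VanishesToOrder

section MomentRecursion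

variable {𝕜 𝔸 : Type*} [NontriviallyNormedField 𝕜] [NormedRing 𝔸] [NormedAlgebra 𝕜 𝔸]
  (σ₁ σ₂ τ γ : 𝔸)

def linkage (B : 𝔸) : 𝔸 := γ + σ₂ * B * σ₁ - σ₁ * B * σ₂

/-- `H'ₙ = momentRHS (Hₙ₊₁) H₀ Hₙ`, with `τ` in place of `σ₁⁻¹`. -/
def momentRHS (A B C : 𝔸) : 𝔸 :=
  τ * σ₂ * A - A * (σ₂ * τ) + τ * linkage σ₁ σ₂ γ B * C - C * (γ * τ)

theorem momentRHS_sub_momentRHS (A B C A' B' C' : 𝔸) :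
    momentRHS σ₁ σ₂ τ γ A B C - momentRHS σ₁ σ₂ τ γ A' B' C' =
      τ * σ₂ * (A - A') - (A - A') * (σ₂ * τ) +
        τ * (σ₂ * (B - B') * σ₁ - σ₁ * (B - B') * σ₂) * C +
        τ * linkage σ₁ σ₂ γ B' * (C - C') - (C - C') * (γ * τ) := by
  unfold momentRHS linkage
  noncomm_ring

variable {σ₁ σ₂ τ γ} {H G : ℕ → 𝕜 → 𝔸}

theorem contDiff_of_hasDerivAt_momentRHS
    (hH : ∀ n x, HasDerivAt (H n) (momentRHS σ₁ σ₂ τ γ (H (n + 1) x) (H 0 x) (H n x)) x)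
    (n : ℕ) : ContDiff 𝕜 ∞ (H n) := by
  suffices ∀ k : ℕ, ∀ n, ContDiff 𝕜 k (H n) from contDiff_infty.mpr fun k => this k n
  intro k
  induction k with
  | zero =>
    exact fun n => contDiff_zero.mpr (Differentiable.continuous fun x => (hH n x).differentiableAt)
  | succ k ih =>
    intro n
    rw [Nat.cast_succ, contDiff_succ_iff_deriv]
    refine ⟨fun x => (hH n x).differentiableAt, by simp, ?_⟩
    rw [deriv_eq (hH n)]
    have := ih (n + 1); have := ih 0; have := ih n
    unfold momentRHS linkage
    fun_prop

theorem VanishesToOrder.momentRHS_sub {A B C A' B' C' : 𝕜 → 𝔸} {k : ℕ} {x : 𝕜}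
    (hA : VanishesToOrder k (fun y => A y - A' y) x)
    (hB : VanishesToOrder k (fun y => B y - B' y) x)
    (hC : VanishesToOrder k (fun y => C y - C' y) x)
    (hAk : ContDiffAt 𝕜 k A x) (hBk : ContDiffAt 𝕜 k B x) (hCk : ContDiffAt 𝕜 k C x)
    (hAk' : ContDiffAt 𝕜 k A' x) (hBk' : ContDiffAt 𝕜 k B' x) (hCk' : ContDiffAt 𝕜 k C' x) :
    VanishesToOrder k
      (fun y => momentRHS σ₁ σ₂ τ γ (A y) (B y) (C y) - momentRHS σ₁ σ₂ τ γ (A' y) (B' y) (C' y))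
      x := by
  simp only [momentRHS_sub_momentRHS, linkage]
  have hB₁ : VanishesToOrder k
      (fun y => σ₂ * (B y - B' y) * σ₁ - σ₁ * (B y - B' y) * σ₂) x := by
    refine ((hB.mul_left ?_ ?_).mul_right ?_ ?_).sub ((hB.mul_left ?_ ?_).mul_right ?_ ?_) ?_ ?_
    all_goals fun_prop
  refine ((((hA.mul_left ?_ ?_).sub (hA.mul_right ?_ ?_) ?_ ?_).add
    ((hB₁.mul_left ?_ ?_).mul_right ?_ ?_) ?_ ?_).add (hC.mul_left ?_ ?_) ?_ ?_).sub
    (hC.mul_right ?_ ?_) ?_ ?_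
  all_goals fun_prop

theorem vanishesToOrder_sub_of_hasDerivAt_momentRHS
    (hH : ∀ n x, HasDerivAt (H n) (momentRHS σ₁ σ₂ τ γ (H (n + 1) x) (H 0 x) (H n x)) x)
    (hG : ∀ n x, HasDerivAt (G n) (momentRHS σ₁ σ₂ τ γ (G (n + 1) x) (G 0 x) (G n x)) x)
    {x₀ : 𝕜} (h₀ : ∀ n, H n x₀ = G n x₀) (k n : ℕ) :
    VanishesToOrder k (fun x => H n x - G n x) x₀ := by
  have hH_smooth := contDiff_of_hasDerivAt_momentRHS hH
  have hG_smooth := contDiff_of_hasDerivAt_momentRHS hG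
  induction k generalizing n with
  | zero => exact vanishesToOrder_zero _ _
  | succ k ih =>
    have hk {F : 𝕜 → 𝔸} (hF : ContDiff 𝕜 ∞ F) : ContDiffAt 𝕜 k F x₀ :=
      hF.contDiffAt.of_le (mod_cast le_top)
    refine vanishesToOrder_succ_iff.mpr ⟨sub_eq_zero.mpr (h₀ n), ?_⟩
    rw [deriv_eq fun x => (hH n x).fun_sub (hG n x)]
    exact (ih (n + 1)).momentRHS_sub (ih 0) (ih n) (hk (hH_smooth _)) (hk (hH_smooth _))
      (hk (hH_smooth _)) (hk (hG_smooth _)) (hk (hG_smooth _)) (hk (hG_smooth _))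

end MomentRecursion

/- Any submultiplicative matrix norm would do; this one makes square matrices a normed
`ℝ`-algebra. -/
attribute [local instance] Matrix.linftyOpNormedRing Matrix.linftyOpNormedAlgebra

theorem Matrix.eq_sum_smul_single {m n α : Type*} [Fintype m] [Fintype n] [DecidableEq m]
    [DecidableEq n] [Semiring α] (M : Matrix m n α) :
    M = ∑ i, ∑ j, M i j • Matrix.single i j (1 : α) := by
  simpa [Matrix.smul_single] using Matrix.matrix_eq_sum_single M

section Matrix

variable {n : Type*} [Fintype n] [DecidableEq n]

theorem Matrix.hasDerivAt_of_forall_apply {F : ℝ → Matrix n n ℂ} {F' : Matrix n n ℂ} {x : ℝ}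
    (hF : ∀ i j, HasDerivAt (fun y => F y i j) (F' i j) x) : HasDerivAt F F' x := by
  rw [funext fun y => Matrix.eq_sum_smul_single (F y), Matrix.eq_sum_smul_single F']
  exact .fun_sum fun i _ => .fun_sum fun j _ => (hF i j).smul_const _

theorem Matrix.analyticAt_of_forall_apply {F : ℝ → Matrix n n ℂ} {x : ℝ}
    (hF : ∀ i j, AnalyticAt ℝ (fun y => F y i j) x) : AnalyticAt ℝ F x := by
  rw [funext fun y => Matrix.eq_sum_smul_single (F y)]
  exact Finset.analyticAt_fun_sum _ fun i _ =>
    Finset.analyticAt_fun_sum _ fun j _ => (hF i j).smul analyticAt_const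

end Matrix

theorem moments_unique_general
    (σ₁ σ₂ γ : Matrix (Fin 2) (Fin 2) ℂ)
    (H H' Ht Ht' : ℕ → ℝ → Matrix (Fin 2) (Fin 2) ℂ)
    (hH : ∀ (n : ℕ) (x : ℝ) (i j : Fin 2),
      HasDerivAt (fun y => H n y i j) (H' n x i j) x)
    (hHt : ∀ (n : ℕ) (x : ℝ) (i j : Fin 2),
      HasDerivAt (fun y => Ht n y i j) (Ht' n x i j) x)
    (hAnal : ∀ i j : Fin 2, AnalyticOnNhd ℝ (fun x : ℝ => H 0 x i j) Set.univ)
    (hAnalt : ∀ i j : Fin 2, AnalyticOnNhd ℝ (fun x : ℝ => Ht 0 x i j) Set.univ)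
    (hrec : ∀ (n : ℕ) (x : ℝ),
      H' n x = σ₁⁻¹ * σ₂ * H (n + 1) x - H (n + 1) x * (σ₂ * σ₁⁻¹) +
        σ₁⁻¹ * (γ + σ₂ * H 0 x * σ₁ - σ₁ * H 0 x * σ₂) * H n x -
        H n x * (γ * σ₁⁻¹))
    (hrect : ∀ (n : ℕ) (x : ℝ),
      Ht' n x = σ₁⁻¹ * σ₂ * Ht (n + 1) x - Ht (n + 1) x * (σ₂ * σ₁⁻¹) +
        σ₁⁻¹ * (γ + σ₂ * Ht 0 x * σ₁ - σ₁ * Ht 0 x * σ₂) * Ht n x -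
        Ht n x * (γ * σ₁⁻¹))
    (h0 : ∀ n : ℕ, H n 0 = Ht n 0) :
    (∀ x : ℝ, H 0 x = Ht 0 x) ∧
    ∀ x : ℝ, γ + σ₂ * H 0 x * σ₁ - σ₁ * H 0 x * σ₂ =
      γ + σ₂ * Ht 0 x * σ₁ - σ₁ * Ht 0 x * σ₂ := by
  have hH_rec (n : ℕ) (x : ℝ) :
      HasDerivAt (H n) (momentRHS σ₁ σ₂ σ₁⁻¹ γ (H (n + 1) x) (H 0 x) (H n x)) x := by
    rw [momentRHS, linkage, ← hrec n x]
    exact Matrix.hasDerivAt_of_forall_apply (hH n x)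
  have hHt_rec (n : ℕ) (x : ℝ) :
      HasDerivAt (Ht n) (momentRHS σ₁ σ₂ σ₁⁻¹ γ (Ht (n + 1) x) (Ht 0 x) (Ht n x)) x := by
    rw [momentRHS, linkage, ← hrect n x]
    exact Matrix.hasDerivAt_of_forall_apply (hHt n x)
  have h_analytic (x : ℝ) : AnalyticAt ℝ (fun y => H 0 y - Ht 0 y) x :=
    Matrix.analyticAt_of_forall_apply fun i j =>
      (hAnal i j x trivial).sub (hAnalt i j x trivial)
  have h_zero := eq_zero_of_forall_vanishesToOrder h_analytic fun k =>
    vanishesToOrder_sub_of_hasDerivAt_momentRHS hH_rec hHt_rec h0 k 0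
  have h_eq (x : ℝ) : H 0 x = Ht 0 x := sub_eq_zero.mp (congrFun h_zero x)
  exact ⟨h_eq, fun x => by rw [h_eq x]⟩

/-- **Uniqueness of the moments:** two sequences of differentiable moments
satisfying the same recursion (with linkage matrices built from their zeroth
moments), with real-analytic zeroth moments and equal initial values at `0`,
have equal zeroth moments, hence equal linkage matrices. -/
theorem moments_unique
    (σ₁ σ₂ γ : Matrix (Fin 2) (Fin 2) ℂ) (hσ₁ : IsUnit σ₁)
    (H H' Ht Ht' : ℕ → ℝ → Matrix (Fin 2) (Fin 2) ℂ)
    (hH : ∀ (n : ℕ) (x : ℝ) (i j : Fin 2),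
      HasDerivAt (fun y => H n y i j) (H' n x i j) x)
    (hHt : ∀ (n : ℕ) (x : ℝ) (i j : Fin 2),
      HasDerivAt (fun y => Ht n y i j) (Ht' n x i j) x)
    (hAnal : ∀ i j : Fin 2, AnalyticOnNhd ℝ (fun x : ℝ => H 0 x i j) Set.univ)
    (hAnalt : ∀ i j : Fin 2, AnalyticOnNhd ℝ (fun x : ℝ => Ht 0 x i j) Set.univ)
    (hrec : ∀ (n : ℕ) (x : ℝ),
      H' n x = σ₁⁻¹ * σ₂ * H (n + 1) x - H (n + 1) x * (σ₂ * σ₁⁻¹) +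
        σ₁⁻¹ * (γ + σ₂ * H 0 x * σ₁ - σ₁ * H 0 x * σ₂) * H n x -
        H n x * (γ * σ₁⁻¹))
    (hrect : ∀ (n : ℕ) (x : ℝ),
      Ht' n x = σ₁⁻¹ * σ₂ * Ht (n + 1) x - Ht (n + 1) x * (σ₂ * σ₁⁻¹) +
        σ₁⁻¹ * (γ + σ₂ * Ht 0 x * σ₁ - σ₁ * Ht 0 x * σ₂) * Ht n x -
        Ht n x * (γ * σ₁⁻¹))
    (h0 : ∀ n : ℕ, H n 0 = Ht n 0) :
    (∀ x : ℝ, H 0 x = Ht 0 x) ∧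
    ∀ x : ℝ, γ + σ₂ * H 0 x * σ₁ - σ₁ * H 0 x * σ₂ =
      γ + σ₂ * Ht 0 x * σ₁ - σ₁ * Ht 0 x * σ₂ :=
  moments_unique_general σ₁ σ₂ γ H H' Ht Ht' hH hHt hAnal hAnalt hrec hrect h0
end

section
/- Every real sequence is a difference of two Hamburger moment sequences: for every sequence (m_n) of real numbers (n ∈ ℕ) there exist finite positive Borel measures μ₊ and μ₋ on ℝ such that for every n ∈ ℕ the function x ↦ xⁿ is integrable with respect to both μ₊ and μ₋, and m_n = ∫ℝ xⁿ dμ₊(x) − ∫ℝ xⁿ dμ₋(x) for all n. -/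
/-!
By a Vandermonde argument there are weights on the points `1, …, k + 1` whose moments of order
`< k` vanish and whose `k`-th moment is `1`. Dilating these atoms by a large factor `c` and
multiplying the weights by `s / cᵏ` keeps this moment pattern (with `k`-th moment `s`) while making
the absolute moments of every order `n < k` at most `2⁻ᵏ`. Choosing the amplitudes `sₖ`
recursively so that the first `n + 1` corrections reproduce `mₙ`, the countable sum of all the
corrections has finite absolute moments of every order, and its positive and negative parts are
the two measures.
-/

open MeasureTheory Finset

def triangularSolution {A : Type*} [AddCommGroup A] (F : ℕ → A → ℕ → A) (m : ℕ → A)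
    (n : ℕ) : A :=
  m n - ∑ k : Fin n, F k (triangularSolution F m k) n

theorem sum_range_succ_triangularSolution {A : Type*} [AddCommGroup A] {F : ℕ → A → ℕ → A}
    (hF : ∀ k s, F k s k = s) (m : ℕ → A) (n : ℕ) :
    ∑ k ∈ range (n + 1), F k (triangularSolution F m k) n = m n := by
  rw [sum_range_succ, hF, triangularSolution.eq_1 F m n, Fin.sum_univ_eq_sum_range
    (fun k => F k (triangularSolution F m k) n)]
  abel

theorem exists_sum_mul_pow_eq {K : Type*} [Field K] {n : ℕ} {v : Fin n → K}
    (hv : Function.Injective v) (b : Fin n → K) :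
    ∃ u : Fin n → K, ∀ j : Fin n, ∑ i, u i * v i ^ (j : ℕ) = b j := by
  have hA : IsUnit (Matrix.vandermonde v).transpose := by
    rw [Matrix.isUnit_iff_isUnit_det, Matrix.det_transpose]
    exact (Matrix.det_vandermonde_ne_zero_iff.mpr hv).isUnit
  obtain ⟨u, hu⟩ := Matrix.mulVec_surjective_iff_isUnit.mpr hA b
  refine ⟨u, fun j => ?_⟩
  simp [← hu, Matrix.mulVec, dotProduct, mul_comm]

theorem exists_weights_sum_mul_pow_eq_ite (k : ℕ) :
    ∃ u : Fin (k + 1) → ℝ, ∀ j ≤ k, ∑ i, u i * ((i : ℝ) + 1) ^ j = if j = k then 1 else 0 := by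
  obtain ⟨u, hu⟩ := exists_sum_mul_pow_eq (v := fun i : Fin (k + 1) => (i : ℝ) + 1)
    (fun i j hij => Fin.ext (by simpa using hij)) (Pi.single (Fin.last k) 1)
  refine ⟨u, fun j hj => ?_⟩
  simpa [Pi.single_apply, Fin.ext_iff] using hu ⟨j, Nat.lt_succ_of_le hj⟩

noncomputable def deltaMomentWeights (k : ℕ) : Fin (k + 1) → ℝ :=
  (exists_weights_sum_mul_pow_eq_ite k).choose

theorem sum_deltaMomentWeights_mul_pow {k j : ℕ} (hj : j ≤ k) :
    ∑ i, deltaMomentWeights k i * ((i : ℝ) + 1) ^ j = if j = k then 1 else 0 :=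
  (exists_weights_sum_mul_pow_eq_ite k).choose_spec j hj

section AtomicMeasure

variable {ι : Type*}

/-- `ENNReal.ofReal` clamps negative weights to `0`: this is the positive part of the signed
measure `∑ p, w p • δ (x p)`. -/
noncomputable def atomicMeasure (w x : ι → ℝ) : Measure ℝ :=
  Measure.sum fun p => ENNReal.ofReal (w p) • Measure.dirac (x p)

theorem summable_toReal_ofReal_mul_norm_pow {w x : ι → ℝ} {n : ℕ}
    (hw : Summable fun p => |w p| * |x p| ^ n) :
    Summable fun p => (ENNReal.ofReal (w p)).toReal * ‖x p ^ n‖ :=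
  hw.of_nonneg_of_le (fun p => by positivity) fun p => by
    rw [ENNReal.toReal_ofReal', norm_pow, Real.norm_eq_abs]
    gcongr
    exact max_le (le_abs_self _) (abs_nonneg _)

variable [Countable ι]

theorem integrable_pow_atomicMeasure {w x : ι → ℝ} {n : ℕ}
    (hw : Summable fun p => |w p| * |x p| ^ n) :
    Integrable (fun y => y ^ n) (atomicMeasure w x) :=
  integrable_sum_dirac (fun _ => ENNReal.ofReal_ne_top) (summable_toReal_ofReal_mul_norm_pow hw)

theorem integral_pow_atomicMeasure {w x : ι → ℝ} {n : ℕ}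
    (hw : Summable fun p => |w p| * |x p| ^ n) :
    ∫ y, y ^ n ∂atomicMeasure w x = ∑' p, max (w p) 0 * x p ^ n := by
  rw [atomicMeasure, integral_sum_dirac_eq_tsum (f := fun y : ℝ => y ^ n)
    (fun _ => ENNReal.ofReal_ne_top) (summable_toReal_ofReal_mul_norm_pow hw)]
  simp only [ENNReal.toReal_ofReal', smul_eq_mul]

theorem isFiniteMeasure_atomicMeasure {w x : ι → ℝ} (hw : Summable fun p => |w p|) :
    IsFiniteMeasure (atomicMeasure w x) := by
  rw [← integrable_const_iff_isFiniteMeasure (one_ne_zero (α := ℝ))]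
  simpa using integrable_pow_atomicMeasure (x := x) (n := 0) (by simpa using hw)

theorem exists_finiteMeasure_moments_sub_eq_tsum (w x : ι → ℝ)
    (hw : ∀ n : ℕ, Summable fun p => |w p| * |x p| ^ n) :
    ∃ μp μn : Measure ℝ, IsFiniteMeasure μp ∧ IsFiniteMeasure μn ∧
      (∀ n : ℕ, Integrable (fun y : ℝ => y ^ n) μp) ∧
      (∀ n : ℕ, Integrable (fun y : ℝ => y ^ n) μn) ∧
      ∀ n : ℕ, (∫ y, y ^ n ∂μp) - ∫ y, y ^ n ∂μn = ∑' p, w p * x p ^ n := by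
  have hw' : ∀ n : ℕ, Summable fun p => |-w p| * |x p| ^ n := by simpa only [abs_neg] using hw
  refine ⟨atomicMeasure w x, atomicMeasure (fun p => -w p) x,
    isFiniteMeasure_atomicMeasure (by simpa using hw 0),
    isFiniteMeasure_atomicMeasure (by simpa using hw' 0),
    fun n => integrable_pow_atomicMeasure (hw n), fun n => integrable_pow_atomicMeasure (hw' n),
    fun n => ?_⟩
  have hmax : ∀ v : ι → ℝ, (Summable fun p => |v p| * |x p| ^ n) →
      Summable fun p => max (v p) 0 * x p ^ n := fun v hv =>
    (summable_toReal_ofReal_mul_norm_pow hv).of_norm_bounded fun p => by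
      simp [ENNReal.toReal_ofReal', abs_of_nonneg (le_max_right (v p) 0)]
  rw [integral_pow_atomicMeasure (hw n), integral_pow_atomicMeasure (hw' n),
    ← (hmax w (hw n)).tsum_sub (hmax _ (hw' n))]
  simp only [← sub_mul, max_zero_sub_max_neg_zero_eq_self]

end AtomicMeasure

section Correction

variable (k : ℕ) (s : ℝ)

/-- Large enough that the dilation by it pushes the absolute moments of order `< k` of the
rescaled weights below `2⁻ᵏ`. -/
noncomputable def correctionScale : ℝ :=
  1 + 2 ^ k * |s| * (∑ i, |deltaMomentWeights k i|) * ((k : ℝ) + 1) ^ k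

noncomputable def correctionWeight (i : Fin (k + 1)) : ℝ :=
  s / correctionScale k s ^ k * deltaMomentWeights k i

noncomputable def correctionPoint (i : Fin (k + 1)) : ℝ :=
  correctionScale k s * ((i : ℝ) + 1)

noncomputable def correctionMoment (n : ℕ) : ℝ :=
  ∑ i, correctionWeight k s i * correctionPoint k s i ^ n

theorem one_le_correctionScale : 1 ≤ correctionScale k s :=
  le_add_of_nonneg_right (by positivity)

theorem correctionMoment_eq (n : ℕ) :
    correctionMoment k s n = s * correctionScale k s ^ n / correctionScale k s ^ k *
      ∑ i, deltaMomentWeights k i * ((i : ℝ) + 1) ^ n := by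
  simp only [correctionMoment, correctionWeight, correctionPoint, mul_sum, mul_pow]
  exact sum_congr rfl fun i _ => by ring

theorem correctionMoment_of_lt {n : ℕ} (h : n < k) : correctionMoment k s n = 0 := by
  rw [correctionMoment_eq, sum_deltaMomentWeights_mul_pow h.le, if_neg h.ne, mul_zero]

theorem correctionMoment_self : correctionMoment k s k = s := by
  have hc : correctionScale k s ^ k ≠ 0 := by
    have := one_le_correctionScale k s
    positivity
  rw [correctionMoment_eq, sum_deltaMomentWeights_mul_pow le_rfl, if_pos rfl, mul_div_assoc,
    div_self hc, mul_one, mul_one]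

theorem sum_abs_correctionWeight_mul_pow_le {n : ℕ} (h : n < k) :
    ∑ i, |correctionWeight k s i| * |correctionPoint k s i| ^ n ≤ (1 / 2) ^ k := by
  set c := correctionScale k s with hc_def
  set V := ∑ i, |deltaMomentWeights k i| with hV_def
  have hc : 1 ≤ c := one_le_correctionScale k s
  have hc0 : 0 < c := by linarith
  have hpow : c ^ n / c ^ k ≤ 1 / c := by
    rw [div_le_div_iff₀ (by positivity) hc0, one_mul, ← pow_succ]
    exact pow_le_pow_right₀ hc h
  have habs : ∑ i, |correctionWeight k s i| * |correctionPoint k s i| ^ n =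
      |s| * (c ^ n / c ^ k) * ∑ i, |deltaMomentWeights k i| * ((i : ℝ) + 1) ^ n := by
    rw [mul_sum]
    refine sum_congr rfl fun i _ => ?_
    have hi : (0 : ℝ) < (i : ℝ) + 1 := by positivity
    rw [correctionWeight, correctionPoint, ← hc_def, abs_mul, abs_div, abs_pow, abs_mul,
      abs_of_pos hc0, abs_of_pos hi, mul_pow]
    ring
  have hsum : ∑ i, |deltaMomentWeights k i| * ((i : ℝ) + 1) ^ n ≤ V * ((k : ℝ) + 1) ^ k := by
    rw [sum_mul]
    gcongr with i
    calc ((i : ℝ) + 1) ^ n ≤ ((k : ℝ) + 1) ^ n := by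
          gcongr
          exact_mod_cast i.is_le
      _ ≤ ((k : ℝ) + 1) ^ k := pow_le_pow_right₀ (by linarith [k.cast_nonneg (α := ℝ)]) h.le
  have hscale : (1 / 2) ^ k * c = (1 / 2) ^ k + |s| * V * ((k : ℝ) + 1) ^ k := by
    have h2 : ((1 : ℝ) / 2) ^ k * 2 ^ k = 1 := by rw [← mul_pow]; norm_num
    rw [hc_def, correctionScale, ← hV_def]
    linear_combination (|s| * V * ((k : ℝ) + 1) ^ k) * h2
  calc _ = |s| * (c ^ n / c ^ k) * ∑ i, |deltaMomentWeights k i| * ((i : ℝ) + 1) ^ n := habs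
    _ ≤ |s| * (1 / c) * (V * ((k : ℝ) + 1) ^ k) := by gcongr
    _ = |s| * V * ((k : ℝ) + 1) ^ k / c := by ring
    _ ≤ (1 / 2) ^ k := by
      rw [div_le_iff₀ hc0, hscale]
      exact le_add_of_nonneg_left (by positivity)

end Correction

theorem summable_abs_correctionWeight_mul_pow (t : ℕ → ℝ) (n : ℕ) :
    Summable fun p : (k : ℕ) × Fin (k + 1) =>
      |correctionWeight p.1 (t p.1) p.2| * |correctionPoint p.1 (t p.1) p.2| ^ n := by
  refine (summable_sigma_of_nonneg fun p => by positivity).2 ⟨fun k => .of_finite, ?_⟩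
  simp only [tsum_fintype]
  refine summable_geometric_two.of_norm_bounded_eventually_nat ?_
  filter_upwards [Filter.eventually_gt_atTop n] with k hk
  rw [Real.norm_of_nonneg (by positivity)]
  exact sum_abs_correctionWeight_mul_pow_le k (t k) hk

theorem tsum_correctionWeight_mul_pow (t : ℕ → ℝ) (n : ℕ) :
    ∑' p : (k : ℕ) × Fin (k + 1),
        correctionWeight p.1 (t p.1) p.2 * correctionPoint p.1 (t p.1) p.2 ^ n =
      ∑ k ∈ range (n + 1), correctionMoment k (t k) n := by
  have hsummable := (summable_abs_correctionWeight_mul_pow t n).of_norm_bounded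
    (f := fun p : (k : ℕ) × Fin (k + 1) =>
      correctionWeight p.1 (t p.1) p.2 * correctionPoint p.1 (t p.1) p.2 ^ n)
    fun p => by rw [norm_mul, norm_pow, Real.norm_eq_abs, Real.norm_eq_abs]
  rw [hsummable.tsum_sigma]
  simp only [tsum_fintype]
  exact tsum_eq_sum fun k hk => correctionMoment_of_lt k (t k) (by simpa using hk)

/-- **Every real sequence is a difference of two Hamburger moment sequences:**
for any real sequence `(mₙ)` there are finite positive Borel measures `μ₊`, `μ₋`
on `ℝ` with all power moments finite such that
`mₙ = ∫ xⁿ dμ₊ - ∫ xⁿ dμ₋` for all `n`. -/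
theorem real_seq_is_difference_of_hamburger_moment_sequences (m : ℕ → ℝ) :
    ∃ μp μn : Measure ℝ, IsFiniteMeasure μp ∧ IsFiniteMeasure μn ∧
      (∀ n : ℕ, Integrable (fun x : ℝ => x ^ n) μp) ∧
      (∀ n : ℕ, Integrable (fun x : ℝ => x ^ n) μn) ∧
      (∀ n : ℕ, m n = (∫ x : ℝ, x ^ n ∂μp) - ∫ x : ℝ, x ^ n ∂μn) := by
  set t := triangularSolution correctionMoment m
  obtain ⟨μp, μn, hp, hn, hip, hin, hmoment⟩ := exists_finiteMeasure_moments_sub_eq_tsum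
    (fun p : (k : ℕ) × Fin (k + 1) => correctionWeight p.1 (t p.1) p.2)
    (fun p => correctionPoint p.1 (t p.1) p.2) (summable_abs_correctionWeight_mul_pow t)
  refine ⟨μp, μn, hp, hn, hip, hin, fun n => ?_⟩
  rw [hmoment, tsum_correctionWeight_mul_pow,
    sum_range_succ_triangularSolution correctionMoment_self m n]
end

section
/- Evolution equation for the linkage matrix: let σ₁, σ₂, γ be 2×2 complex matrices with σ₁ invertible. Let H₀ : ℝ² → M₂(ℂ) be twice differentiable in x and differentiable in t, and H₁ : ℝ² → M₂(ℂ) be differentiable in x. Define γ*(x,t) := γ + σ₂ H₀(x,t) σ₁ − σ₁ H₀(x,t) σ₂. Assume that for all (x,t): ∂ₓH₀ = σ₁⁻¹σ₂ H₁ − H₁ σ₂σ₁⁻¹ + σ₁⁻¹γ* H₀ − H₀ γ σ₁⁻¹ and ∂ₜH₀ = i ∂ₓH₁ + i ∂ₓ[H₀] σ₁ H₀. Then for all (x,t): ∂ₜγ* = −i γ* ∂ₓ[H₀] σ₁ + i σ₁ ∂ₓₓ[H₀] σ₁ + i σ₁ ∂ₓ[H₀] γ*. -/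
/-!
Differentiating the recursion for `∂ₓH₀` once more in `x` expresses `∂ₓₓH₀` through `∂ₓH₁`.
On the other hand `∂ₜγ* = σ₂ ∂ₜH₀ σ₁ - σ₁ ∂ₜH₀ σ₂`, and inserting the evolution equation for
`∂ₜH₀` there, the `∂ₓH₁` terms of both sides match after conjugating `∂ₓₓH₀` by `σ₁`; what remains
is an identity in an arbitrary ring in which `σ₁` only enters through `σ₁ σ₁⁻¹ = σ₁⁻¹ σ₁ = 1`.
-/

/-- The linkage matrix `γ* = γ + σ₂ H₀ σ₁ - σ₁ H₀ σ₂` built from a moment. -/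
noncomputable def gammaStarM (σ₁ σ₂ γ H0 : Matrix (Fin 2) (Fin 2) ℂ) :
    Matrix (Fin 2) (Fin 2) ℂ :=
  γ + σ₂ * H0 * σ₁ - σ₁ * H0 * σ₂

theorem linkage_evolution_identity {R : Type*} [Ring R] (s : Rˣ) (σ₂ γ H H' H'' K : R)
    (hH'' : H'' = ↑s⁻¹ * σ₂ * K - K * (σ₂ * ↑s⁻¹) +
      (↑s⁻¹ * (σ₂ * H' * s - s * H' * σ₂) * H + ↑s⁻¹ * (γ + σ₂ * H * s - s * H * σ₂) * H') -
      H' * (γ * ↑s⁻¹)) :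
    σ₂ * (K + H' * s * H) * s - s * (K + H' * s * H) * σ₂ =
      -((γ + σ₂ * H * s - s * H * σ₂) * (H' * s)) + s * (H'' * s) +
        s * (H' * (γ + σ₂ * H * s - s * H * σ₂)) := by
  subst hH''
  simp only [mul_add, add_mul, mul_sub, sub_mul, mul_assoc, Units.mul_inv_cancel_left,
    Units.inv_mul, mul_one]
  abel

section EntrywiseDeriv

variable {𝕜 𝔸 : Type*} [NontriviallyNormedField 𝕜] [NormedRing 𝔸] [NormedAlgebra 𝕜 𝔸]
  {l m n : Type*} {x : 𝕜}

def HasEntrywiseDerivAt (A : 𝕜 → Matrix m n 𝔸) (A' : Matrix m n 𝔸) (x : 𝕜) : Prop :=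
  ∀ i j, HasDerivAt (fun y => A y i j) (A' i j) x

namespace HasEntrywiseDerivAt

variable {A B : 𝕜 → Matrix m n 𝔸} {A' B' : Matrix m n 𝔸}

theorem const (C : Matrix m n 𝔸) (x : 𝕜) : HasEntrywiseDerivAt (fun _ => C) 0 x :=
  fun i j => hasDerivAt_const x (C i j)

theorem unique (h₁ : HasEntrywiseDerivAt A A' x) (h₂ : HasEntrywiseDerivAt A B' x) :
    A' = B' :=
  Matrix.ext fun i j => (h₁ i j).unique (h₂ i j)

theorem add (hA : HasEntrywiseDerivAt A A' x) (hB : HasEntrywiseDerivAt B B' x) :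
    HasEntrywiseDerivAt (fun y => A y + B y) (A' + B') x :=
  fun i j => (hA i j).add (hB i j)

theorem sub (hA : HasEntrywiseDerivAt A A' x) (hB : HasEntrywiseDerivAt B B' x) :
    HasEntrywiseDerivAt (fun y => A y - B y) (A' - B') x :=
  fun i j => (hA i j).sub (hB i j)

theorem mul [Fintype m] {A : 𝕜 → Matrix l m 𝔸} {A' : Matrix l m 𝔸}
    (hA : HasEntrywiseDerivAt A A' x) (hB : HasEntrywiseDerivAt B B' x) :
    HasEntrywiseDerivAt (fun y => A y * B y) (A' * B x + A x * B') x := fun i j => by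
  simp only [Matrix.mul_apply, Matrix.add_apply, ← Finset.sum_add_distrib]
  exact HasDerivAt.fun_sum fun k _ => (hA i k).mul (hB k j)

theorem const_mul [Fintype m] (C : Matrix l m 𝔸) (hB : HasEntrywiseDerivAt B B' x) :
    HasEntrywiseDerivAt (fun y => C * B y) (C * B') x := by
  simpa using (const C x).mul hB

theorem mul_const [Fintype n] (hA : HasEntrywiseDerivAt A A' x) (C : Matrix n l 𝔸) :
    HasEntrywiseDerivAt (fun y => A y * C) (A' * C) x := by
  simpa using hA.mul (const C x)

end HasEntrywiseDerivAt

theorem hasEntrywiseDerivAt_gammaStarM [NormedAlgebra 𝕜 ℂ] (σ₁ σ₂ γ : Matrix (Fin 2) (Fin 2) ℂ)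
    {H : 𝕜 → Matrix (Fin 2) (Fin 2) ℂ} {H' : Matrix (Fin 2) (Fin 2) ℂ}
    (hH : HasEntrywiseDerivAt H H' x) :
    HasEntrywiseDerivAt (fun y => gammaStarM σ₁ σ₂ γ (H y)) (σ₂ * H' * σ₁ - σ₁ * H' * σ₂) x := by
  simpa [gammaStarM] using
    ((HasEntrywiseDerivAt.const γ x).add ((hH.const_mul σ₂).mul_const σ₁)).sub
      ((hH.const_mul σ₁).mul_const σ₂)

end EntrywiseDeriv

/-- **Evolution equation for the linkage matrix:** if
`∂ₓH₀ = σ₁⁻¹σ₂H₁ - H₁σ₂σ₁⁻¹ + σ₁⁻¹γ*H₀ - H₀γσ₁⁻¹` and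
`∂ₜH₀ = i ∂ₓH₁ + i ∂ₓ[H₀] σ₁ H₀`, then
`∂ₜγ* = -i γ* ∂ₓ[H₀] σ₁ + i σ₁ ∂ₓₓ[H₀] σ₁ + i σ₁ ∂ₓ[H₀] γ*`. -/
theorem linkage_matrix_evolution
    (σ₁ σ₂ γ : Matrix (Fin 2) (Fin 2) ℂ) (hσ₁ : IsUnit σ₁)
    (H0 H0x H0xx H0t H1 H1x : ℝ → ℝ → Matrix (Fin 2) (Fin 2) ℂ)
    (hH0x : ∀ (x t : ℝ) (i j : Fin 2),
      HasDerivAt (fun y => H0 y t i j) (H0x x t i j) x)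
    (hH0xx : ∀ (x t : ℝ) (i j : Fin 2),
      HasDerivAt (fun y => H0x y t i j) (H0xx x t i j) x)
    (hH0t : ∀ (x t : ℝ) (i j : Fin 2),
      HasDerivAt (fun s => H0 x s i j) (H0t x t i j) t)
    (hH1x : ∀ (x t : ℝ) (i j : Fin 2),
      HasDerivAt (fun y => H1 y t i j) (H1x x t i j) x)
    (hrec : ∀ x t : ℝ,
      H0x x t = σ₁⁻¹ * σ₂ * H1 x t - H1 x t * (σ₂ * σ₁⁻¹) +
        σ₁⁻¹ * gammaStarM σ₁ σ₂ γ (H0 x t) * H0 x t - H0 x t * (γ * σ₁⁻¹))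
    (hevol : ∀ x t : ℝ,
      H0t x t = Complex.I • H1x x t + Complex.I • (H0x x t * σ₁ * H0 x t)) :
    ∀ (x t : ℝ) (i j : Fin 2),
      HasDerivAt (fun s => gammaStarM σ₁ σ₂ γ (H0 x s) i j)
        (((-Complex.I) • (gammaStarM σ₁ σ₂ γ (H0 x t) * (H0x x t * σ₁)) +
          Complex.I • (σ₁ * (H0xx x t * σ₁)) +
          Complex.I • (σ₁ * (H0x x t * gammaStarM σ₁ σ₂ γ (H0 x t)))) i j) t := by
  intro x t
  have dH0 : HasEntrywiseDerivAt (fun y => H0 y t) (H0x x t) x := hH0x x t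
  have dH1 : HasEntrywiseDerivAt (fun y => H1 y t) (H1x x t) x := hH1x x t
  have hH0xx_eq : H0xx x t =
      σ₁⁻¹ * σ₂ * H1x x t - H1x x t * (σ₂ * σ₁⁻¹) +
        (σ₁⁻¹ * (σ₂ * H0x x t * σ₁ - σ₁ * H0x x t * σ₂) * H0 x t +
          σ₁⁻¹ * gammaStarM σ₁ σ₂ γ (H0 x t) * H0x x t) - H0x x t * (γ * σ₁⁻¹) := by
    refine HasEntrywiseDerivAt.unique (hH0xx x t) ?_
    rw [funext (hrec · t)]
    exact ((dH1.const_mul _).sub (dH1.mul_const _)).add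
      (((hasEntrywiseDerivAt_gammaStarM _ _ _ dH0).const_mul _).mul dH0) |>.sub (dH0.mul_const _)
  obtain ⟨s, rfl⟩ := hσ₁
  rw [← Matrix.coe_units_inv] at hH0xx_eq
  have hγt := hasEntrywiseDerivAt_gammaStarM (↑s) σ₂ γ (hH0t x t)
  rwa [hevol, ← smul_add, Matrix.mul_smul, Matrix.smul_mul, Matrix.mul_smul, Matrix.smul_mul,
    ← smul_sub, linkage_evolution_identity s σ₂ γ (H0 x t) (H0x x t) (H0xx x t) (H1x x t) hH0xx_eq,
    smul_add, smul_add, smul_neg, ← neg_smul] at hγt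
end

section
/- Global invertibility of X: let H be a complex Hilbert space, σ₂ a 2×2 complex matrix acting on ℂ², and let B : ℝ → L(ℂ², H), C : ℝ → L(H, ℂ²), B* : ℝ → L(ℂ², H), C* : ℝ → L(H, ℂ²), X, X* : ℝ → L(H, H) be differentiable in operator norm with X'(x) = B(x)∘σ₂∘C(x) and (X*)'(x) = −B*(x)∘σ₂∘C*(x). Assume the intertwining relations X(x)∘B*(x) = B(x), C*(x)∘X(x) = C(x), X*(x)∘B(x) = B*(x), C(x)∘X*(x) = C*(x) hold for all x, and that X(0)∘X*(0) = id_H and X*(0)∘X(0) = id_H. Then X(x)∘X*(x) = id_H and X*(x)∘X(x) = id_H for all x ∈ ℝ; in particular X(x) is invertible with inverse X*(x) for every x. -/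
open ContinuousLinearMap

/-!
Differentiating with the product rule, `(X X*)' = B σ₂ C X* - X B* σ₂ C*`, and the intertwining
relations `C X* = C*`, `X B* = B` make the two terms equal; likewise for `(X* X)'`. Both products
therefore have zero derivative on `ℝ`, so they are constant, equal to their value `1` at `0`.
-/

theorem mul_eq_mul_of_hasDerivAt_of_deriv_mul_eq_zero {𝕜 A : Type*} [RCLike 𝕜] [NormedRing A]
    [NormedAlgebra 𝕜 A] {f g f' g' : 𝕜 → A} (hf : ∀ x, HasDerivAt f (f' x) x)
    (hg : ∀ x, HasDerivAt g (g' x) x) (h : ∀ x, f' x * g x + f x * g' x = 0) (x y : 𝕜) :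
    f x * g x = f y * g y := by
  have hfg (z : 𝕜) : HasDerivAt (f * g) 0 z := h z ▸ (hf z).mul (hg z)
  exact is_const_of_deriv_eq_zero (fun z => (hfg z).differentiableAt) (fun z => (hfg z).deriv) x y

theorem comp_comp_comp_eq_of_intertwining {R E F G H : Type*} [Semiring R]
    [AddCommMonoid E] [Module R E] [TopologicalSpace E]
    [AddCommMonoid F] [Module R F] [TopologicalSpace F]
    [AddCommMonoid G] [Module R G] [TopologicalSpace G]
    [AddCommMonoid H] [Module R H] [TopologicalSpace H]
    {b : G →L[R] F} {b' : G →L[R] E} {s : G →L[R] G} {c : H →L[R] G} {c' : E →L[R] G}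
    {x : E →L[R] F} {y : E →L[R] H} (hb : x ∘L b' = b) (hc : c ∘L y = c') :
    ((b ∘L s) ∘L c) ∘L y = x ∘L ((b' ∘L s) ∘L c') := by
  rw [← hb, ← hc]
  simp only [comp_assoc]

theorem global_invertibility_of_X_general
    {H : Type*} [NormedAddCommGroup H] [InnerProductSpace ℂ H]
    (σ₂ : (Fin 2 → ℂ) →L[ℂ] (Fin 2 → ℂ))
    (B Bst : ℝ → ((Fin 2 → ℂ) →L[ℂ] H))
    (C Cst : ℝ → (H →L[ℂ] (Fin 2 → ℂ)))
    (X Xst : ℝ → (H →L[ℂ] H))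
    (hX : ∀ x : ℝ, HasDerivAt X ((B x ∘L σ₂) ∘L C x) x)
    (hXst : ∀ x : ℝ, HasDerivAt Xst (-((Bst x ∘L σ₂) ∘L Cst x)) x)
    (h₁ : ∀ x : ℝ, X x ∘L Bst x = B x)
    (h₂ : ∀ x : ℝ, Cst x ∘L X x = C x)
    (h₃ : ∀ x : ℝ, Xst x ∘L B x = Bst x)
    (h₄ : ∀ x : ℝ, C x ∘L Xst x = Cst x)
    (h₀ : X 0 ∘L Xst 0 = 1 ∧ Xst 0 ∘L X 0 = 1) :
    ∀ x : ℝ, X x ∘L Xst x = 1 ∧ Xst x ∘L X x = 1 := by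
  have hXXst (x : ℝ) :
      (B x ∘L σ₂) ∘L C x * Xst x + X x * -((Bst x ∘L σ₂) ∘L Cst x) = 0 := by
    rw [mul_neg, mul_def, mul_def, comp_comp_comp_eq_of_intertwining (h₁ x) (h₄ x), add_neg_cancel]
  have hXstX (x : ℝ) :
      -((Bst x ∘L σ₂) ∘L Cst x) * X x + Xst x * ((B x ∘L σ₂) ∘L C x) = 0 := by
    rw [neg_mul, mul_def, mul_def, comp_comp_comp_eq_of_intertwining (h₃ x) (h₂ x), neg_add_cancel]
  intro x
  exact ⟨(mul_eq_mul_of_hasDerivAt_of_deriv_mul_eq_zero hX hXst hXXst x 0).trans h₀.1,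
    (mul_eq_mul_of_hasDerivAt_of_deriv_mul_eq_zero hXst hX hXstX x 0).trans h₀.2⟩

/-- **Global invertibility of `X`:** if `X' = B σ₂ C`, `(X*)' = -B* σ₂ C*`, the
intertwining relations `X B* = B`, `C* X = C`, `X* B = B*`, `C X* = C*` hold, and
`X(0) X*(0) = id = X*(0) X(0)`, then `X(x) X*(x) = id = X*(x) X(x)` for all `x`;
in particular `X(x)` is invertible with inverse `X*(x)`. -/
theorem global_invertibility_of_X
    {H : Type*} [NormedAddCommGroup H] [InnerProductSpace ℂ H] [CompleteSpace H]
    (σ₂ : (Fin 2 → ℂ) →L[ℂ] (Fin 2 → ℂ))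
    (B Bst : ℝ → ((Fin 2 → ℂ) →L[ℂ] H))
    (C Cst : ℝ → (H →L[ℂ] (Fin 2 → ℂ)))
    (X Xst : ℝ → (H →L[ℂ] H))
    (hB : Differentiable ℝ B) (hBst : Differentiable ℝ Bst)
    (hC : Differentiable ℝ C) (hCst : Differentiable ℝ Cst)
    (hX : ∀ x : ℝ, HasDerivAt X ((B x ∘L σ₂) ∘L C x) x)
    (hXst : ∀ x : ℝ, HasDerivAt Xst (-((Bst x ∘L σ₂) ∘L Cst x)) x)
    (h₁ : ∀ x : ℝ, X x ∘L Bst x = B x)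
    (h₂ : ∀ x : ℝ, Cst x ∘L X x = C x)
    (h₃ : ∀ x : ℝ, Xst x ∘L B x = Bst x)
    (h₄ : ∀ x : ℝ, C x ∘L Xst x = Cst x)
    (h₀ : X 0 ∘L Xst 0 = 1 ∧ Xst 0 ∘L X 0 = 1) :
    ∀ x : ℝ, X x ∘L Xst x = 1 ∧ Xst x ∘L X x = 1 :=
  global_invertibility_of_X_general σ₂ B Bst C Cst X Xst hX hXst h₁ h₂ h₃ h₄ h₀
end
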